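/- arXiv:2404.03627 — 8 statements merged into one kernel-verified Lean document; each statement's English description precedes it below -/
import Mathlib

section
/- For any p-partite quantum state |ψ⟩ in (K^d)^{⊗p} (a unit vector for the standard 2-norm, K = ℝ or ℂ), the injective norm of |ψ⟩, defined as the maximum over unit vectors x^(1),...,x^(p) in K^d of |⟨ψ, x^(1)⊗...⊗x^(p)⟩|, is at least d^{-(p-1)/2}. -/
lemma sum_cons_split {M : Type*} [AddCommMonoid M] (p' d : ℕ)
    (f : (Fin (p'+1) → Fin d) → M) :
    ∑ i, f i = ∑ j : Fin p' → Fin d, ∑ a : Fin d, f (Fin.cons a j) := by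
  rw [← (Fin.consEquiv fun _ => Fin d).sum_comp f, Fintype.sum_prod_type_right]
  rfl

lemma inj_bdd {K : Type*} [RCLike K] (p d : ℕ)
    (ψ : (Fin p → Fin d) → K)
    (hψ : ∑ i : Fin p → Fin d, ‖ψ i‖ ^ 2 = 1) :
    BddAbove {r : ℝ | ∃ x : Fin p → Fin d → K,
        (∀ k, ∑ j, ‖x k j‖ ^ 2 = 1) ∧
        r = ‖∑ i : Fin p → Fin d, ψ i * ∏ k, x k (i k)‖} := by
  refine ⟨1, ?_⟩
  rintro r ⟨x, hx, rfl⟩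
  have h1 : ‖∑ i : Fin p → Fin d, ψ i * ∏ k, x k (i k)‖
      ≤ ∑ i : Fin p → Fin d, ‖ψ i‖ * ∏ k, ‖x k (i k)‖ := by
    refine (norm_sum_le _ _).trans (le_of_eq ?_)
    refine Finset.sum_congr rfl fun i _ => ?_
    rw [norm_mul, norm_prod]
  refine h1.trans ?_
  have h2 := Finset.sum_mul_sq_le_sq_mul_sq Finset.univ (fun i : Fin p → Fin d => ‖ψ i‖)
      (fun i => ∏ k, ‖x k (i k)‖)
  have h3 : ∑ i : Fin p → Fin d, (∏ k, ‖x k (i k)‖) ^ 2 = 1 := by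
    have : ∀ i : Fin p → Fin d, (∏ k, ‖x k (i k)‖) ^ 2 = ∏ k, ‖x k (i k)‖ ^ 2 := by
      intro i; rw [← Finset.prod_pow]
    simp_rw [this]
    rw [← Fintype.prod_sum fun k j => ‖x k j‖ ^ 2]
    simp [hx]
  rw [hψ, h3, mul_one] at h2
  nlinarith [Finset.sum_nonneg (s := (Finset.univ : Finset (Fin p → Fin d)))
    (f := fun i => ‖ψ i‖ * ∏ k, ‖x k (i k)‖)
    (fun i _ => mul_nonneg (norm_nonneg _) (Finset.prod_nonneg fun k _ => norm_nonneg _))]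

/-- For any `p`-partite quantum state `ψ ∈ (K^d)^{⊗p}` (unit Hilbert–Schmidt norm,
`K = ℝ` or `ℂ`), the injective norm of `ψ` is at least `d^{-(p-1)/2}`. -/
theorem injective_norm_lower_bound {K : Type*} [RCLike K] (p d : ℕ) (hp : 1 ≤ p) (hd : 1 ≤ d)
    (ψ : (Fin p → Fin d) → K)
    (hψ : ∑ i : Fin p → Fin d, ‖ψ i‖ ^ 2 = 1) :
    (d : ℝ) ^ (-((p : ℝ) - 1) / 2) ≤
      sSup {r : ℝ | ∃ x : Fin p → Fin d → K,
        (∀ k, ∑ j, ‖x k j‖ ^ 2 = 1) ∧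
        r = ‖∑ i : Fin p → Fin d, ψ i * ∏ k, x k (i k)‖} := by
  have hbdd := inj_bdd p d ψ hψ
  obtain ⟨p', rfl⟩ : ∃ p', p = p' + 1 := ⟨p - 1, by omega⟩
  have hd0 : (0:ℝ) < d := by exact_mod_cast hd
  set S : (Fin p' → Fin d) → ℝ := fun j => ∑ a : Fin d, ‖ψ (Fin.cons a j)‖ ^ 2 with hS
  have hSsum : ∑ j, S j = 1 := by
    rw [← hψ, sum_cons_split p' d fun i => ‖ψ i‖ ^ 2]
  have hSnn : ∀ j, 0 ≤ S j := fun j => Finset.sum_nonneg fun a _ => by positivity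
  -- find a good slice
  have hcard : (Fintype.card (Fin p' → Fin d) : ℝ) = (d : ℝ) ^ p' := by
    simp [Fintype.card_fun]
  obtain ⟨j, hj⟩ : ∃ j, ((d : ℝ) ^ p')⁻¹ ≤ S j := by
    by_contra h
    push_neg at h
    have hne : (Finset.univ : Finset (Fin p' → Fin d)).Nonempty := by
      refine ⟨fun _ => ⟨0, by omega⟩, Finset.mem_univ _⟩
    have := Finset.sum_lt_sum_of_nonempty hne (fun j _ => h j)
    rw [hSsum, Finset.sum_const, Finset.card_univ, nsmul_eq_mul, hcard,
      mul_inv_cancel₀ (by positivity)] at this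
    exact lt_irrefl _ this
  set v : Fin d → K := fun a => ψ (Fin.cons a j) with hv
  set N : ℝ := Real.sqrt (S j) with hN
  have hSj0 : 0 < S j := lt_of_lt_of_le (by positivity) hj
  have hN0 : 0 < N := Real.sqrt_pos.2 hSj0
  have hN2 : N ^ 2 = S j := Real.sq_sqrt hSj0.le
  set x : Fin (p'+1) → Fin d → K :=
    Fin.cons (fun a => (starRingEnd K) (v a) / (N : K))
      (fun k a => if a = j k then 1 else 0) with hx
  have hxunit : ∀ k, ∑ a, ‖x k a‖ ^ 2 = 1 := by
    intro k
    refine Fin.cases ?_ (fun k => ?_) k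
    · simp only [hx, Fin.cons_zero]
      have : ∀ a : Fin d, ‖(starRingEnd K) (v a) / (N : K)‖ ^ 2 = ‖v a‖ ^ 2 / N ^ 2 := by
        intro a
        rw [norm_div, RCLike.norm_conj, RCLike.norm_ofReal, abs_of_pos hN0, div_pow]
      rw [Finset.sum_congr rfl fun a _ => this a, ← Finset.sum_div, hN2]
      exact div_self hSj0.ne'
    · simp only [hx, Fin.cons_succ]
      rw [Finset.sum_eq_single (j k)]
      · simp
      · intro b _ hb; simp [hb]
      · simp
  -- compute the value
  have hval : ∑ i : Fin (p'+1) → Fin d, ψ i * ∏ k, x k (i k)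
      = ((S j : ℝ) : K) / (N : K) := by
    rw [sum_cons_split p' d fun i => ψ i * ∏ k, x k (i k)]
    have hterm : ∀ (j' : Fin p' → Fin d) (a : Fin d),
        ψ (Fin.cons a j') * ∏ k, x k ((Fin.cons a j' : Fin (p'+1) → Fin d) k)
        = ψ (Fin.cons a j') * (((starRingEnd K) (v a) / (N : K)) *
            if j' = j then 1 else 0) := by
      intro j' a
      congr 1
      rw [Fin.prod_univ_succ]
      simp only [hx, Fin.cons_zero, Fin.cons_succ]
      congr 1
      rw [Finset.prod_boole]
      congr 1
      simp [funext_iff, eq_iff_iff]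
    simp_rw [hterm]
    rw [Finset.sum_eq_single j]
    · simp only [eq_self_iff_true, if_true, mul_one]
      have : ∀ a : Fin d, ψ (Fin.cons a j) * ((starRingEnd K) (v a) / (N : K))
          = ((‖v a‖ ^ 2 : ℝ) : K) / (N : K) := by
        intro a
        rw [mul_div_assoc' ]
        congr 1
        rw [hv]
        push_cast
        exact RCLike.mul_conj _
      rw [Finset.sum_congr rfl fun a _ => this a, ← Finset.sum_div]
      congr 1
      rw [hS]
      push_cast
      rfl
    · intro b _ hb
      simp [hb]
    · simp
  -- conclude
  have hmem : N ∈ {r : ℝ | ∃ x : Fin (p'+1) → Fin d → K,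
        (∀ k, ∑ j, ‖x k j‖ ^ 2 = 1) ∧
        r = ‖∑ i : Fin (p'+1) → Fin d, ψ i * ∏ k, x k (i k)‖} := by
    refine ⟨x, hxunit, ?_⟩
    rw [hval]
    rw [norm_div, RCLike.norm_ofReal, RCLike.norm_ofReal, abs_of_pos hSj0,
      abs_of_pos hN0]
    rw [← hN2, pow_two, mul_div_assoc, div_self hN0.ne', mul_one]
  refine le_trans ?_ (le_csSup hbdd hmem)
  -- d ^ (-(p'+1-1)/2) ≤ N
  have hexp : (-(((p':ℝ)+1) - 1) / 2) = -((p':ℝ)/2) := by ring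
  push_cast
  rw [hexp]
  have : (d:ℝ) ^ (-((p':ℝ)/2)) = Real.sqrt (((d:ℝ) ^ p')⁻¹) := by
    rw [Real.sqrt_eq_rpow, ← Real.rpow_natCast (d:ℝ) p',
      ← Real.rpow_neg_one ((d:ℝ) ^ (p':ℝ)),
      ← Real.rpow_mul hd0.le, ← Real.rpow_mul hd0.le]
    congr 1
    ring
  rw [this, hN]
  exact Real.sqrt_le_sqrt hj
end

section
/- For a real symmetric tensor T ∈ (ℝ^d)^{⊗p} (invariant under all permutations of its indices), the injective norm equals the maximum over a single unit vector: max over unit x^(1),...,x^(p) of |⟨T, x^(1)⊗⋯⊗x^(p)⟩| equals max over unit x of |⟨T, x⊗⋯⊗x⟩|. -/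
open Function Metric Set
open scoped RealInnerProductSpace

/-!
Let `f` be a symmetric multilinear form and `M` the maximum of `|f|` on the product of unit
spheres. Among the maximisers pick one maximising `‖∑ₘ xₘ‖`. If two of its slots `u ≠ v`
differed, freezing the other slots gives a symmetric bilinear form `B` with `|B c c| ≤ M ‖c‖²` and
`|B u v| = M`. Polarisation, `4 B u v = B (u+v) (u+v) - B (u-v) (u-v)`, and the parallelogram law
`‖u+v‖² + ‖u-v‖² = 4` force `|B z z| = M ‖z‖²` for `z = u ± v`, so a unit multiple `c` of `u + v`
or of `u - v` put into both slots is again a maximiser; since `‖u + v‖ < 2`, it can be chosen so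
that `‖∑ₘ xₘ‖` strictly increases.
-/

theorem Fintype.sum_update_eq_sub_add {ι M : Type*} [Fintype ι] [DecidableEq ι] [AddCommGroup M]
    (g : ι → M) (i : ι) (b : M) : ∑ m, update g i b m = ∑ m, g m - g i + b := by
  rw [Finset.sum_update_of_mem (Finset.mem_univ i), ← Finset.sum_erase_eq_sub (Finset.mem_univ i),
    Finset.sdiff_singleton_eq_erase, add_comm]

namespace LinearMap.BilinForm

variable {E : Type*} [NormedAddCommGroup E] [InnerProductSpace ℝ E] {B : LinearMap.BilinForm ℝ E}
  {M : ℝ}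

theorem abs_apply_self_le_of_norm_eq_one (hB : ∀ c : E, ‖c‖ = 1 → |B c c| ≤ M) (c : E) :
    |B c c| ≤ M * ‖c‖ ^ 2 := by
  rcases eq_or_ne c 0 with rfl | hc
  · simp
  have hc' : ‖c‖ ≠ 0 := norm_ne_zero_iff.2 hc
  have hscale : B c c = ‖c‖ ^ 2 * B (‖c‖⁻¹ • c) (‖c‖⁻¹ • c) := by
    simp only [map_smul, LinearMap.smul_apply, smul_eq_mul]
    field_simp
  rw [hscale, abs_mul, abs_of_nonneg (by positivity), mul_comm]
  gcongr
  exact hB _ (norm_smul_inv_norm hc)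

theorem IsSymm.abs_apply_add_add_eq_of_abs_apply_eq (hsymm : B.IsSymm)
    (hM : ∀ c : E, |B c c| ≤ M * ‖c‖ ^ 2) {u v : E} (hu : ‖u‖ = 1) (hv : ‖v‖ = 1)
    (huv : |B u v| = M) :
    |B (u + v) (u + v)| = M * ‖u + v‖ ^ 2 := by
  have polar : B (u + v) (u + v) - B (u - v) (u - v) = 4 * B u v := by
    simp only [map_add, map_sub, LinearMap.add_apply, LinearMap.sub_apply, hsymm.eq v u]
    ring
  have para := parallelogram_law_with_norm ℝ u v
  rw [hu, hv] at para
  have h4M : 4 * M ≤ |B (u + v) (u + v)| + |B (u - v) (u - v)| :=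
    calc 4 * M = |B (u + v) (u + v) - B (u - v) (u - v)| := by
          rw [polar, abs_mul, huv]; norm_num
      _ ≤ _ := abs_sub _ _
  have hsum : M * ‖u + v‖ ^ 2 + M * ‖u - v‖ ^ 2 = 4 * M := by rw [← mul_add, para]; ring
  linarith [hM (u + v), hM (u - v)]

end LinearMap.BilinForm

section Geometry

variable {E : Type*} [NormedAddCommGroup E] [InnerProductSpace ℝ E]

theorem norm_add_lt_norm_add_add {x c w : E} (hc : ‖c‖ = 1)
    (h : ‖x‖ ^ 2 + 2 * ⟪x, w⟫ < 4 + 4 * ⟪c, w⟫) : ‖x + w‖ < ‖c + c + w‖ := by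
  have hcc : ‖c + c‖ = 2 := by rw [← two_smul ℝ c, norm_smul, hc]; norm_num
  refine lt_of_pow_lt_pow_left₀ 2 (norm_nonneg _) ?_
  rw [norm_add_sq_real, norm_add_sq_real (c + c), hcc, inner_add_left]
  linarith

theorem exists_norm_smul_eq_one_and_norm_add_lt {u v : E} (w : E) (hu : ‖u‖ = 1) (hv : ‖v‖ = 1)
    (huv : u ≠ v) : ∃ (a : ℝ) (z : E), (z = u + v ∨ z = u - v) ∧ ‖a • z‖ = 1 ∧
      ‖u + v + w‖ < ‖a • z + a • z + w‖ := by
  have para := parallelogram_law_with_norm ℝ u v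
  rw [hu, hv] at para
  have ht : 0 < ‖u - v‖ := norm_pos_iff.2 (sub_ne_zero.2 huv)
  by_cases hsw : 0 < ⟪u + v, w⟫
  · have hs : u + v ≠ 0 := fun h => by simp [h] at hsw
    have hs' : 0 < ‖u + v‖ := norm_pos_iff.2 hs
    have hs2 : ‖u + v‖ < 2 := by nlinarith
    refine ⟨‖u + v‖⁻¹, u + v, .inl rfl, norm_smul_inv_norm hs, norm_add_lt_norm_add_add
      (norm_smul_inv_norm hs) ?_⟩
    have : 2 ≤ 4 * ‖u + v‖⁻¹ := by
      rw [← div_eq_mul_inv, le_div_iff₀ hs']; linarith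
    rw [real_inner_smul_left]
    nlinarith
  · obtain ⟨ε, hε, hεw⟩ : ∃ ε : ℝ, |ε| = 1 ∧ 0 ≤ ε * ⟪u - v, w⟫ := by
      rcases le_total 0 ⟪u - v, w⟫ with h | h
      · exact ⟨1, by simp, by simpa⟩
      · exact ⟨-1, by simp, by linarith⟩
    have hnorm : ‖(ε / ‖u - v‖) • (u - v)‖ = 1 := by
      rw [norm_smul, Real.norm_eq_abs, abs_div, hε, abs_norm, one_div_mul_cancel ht.ne']
    refine ⟨ε / ‖u - v‖, u - v, .inr rfl, hnorm, norm_add_lt_norm_add_add hnorm ?_⟩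
    rw [real_inner_smul_left, div_mul_eq_mul_div]
    have : 0 ≤ ε * ⟪u - v, w⟫ / ‖u - v‖ := div_nonneg hεw ht.le
    nlinarith

end Geometry

namespace MultilinearMap

variable {R ι M N : Type*} [CommSemiring R] [AddCommMonoid M] [Module R M] [AddCommMonoid N]
  [Module R N] [DecidableEq ι] (f : MultilinearMap R (fun _ : ι => M) N)

def twoSlotBilin (x : ι → M) {k l : ι} (hkl : k ≠ l) : M →ₗ[R] M →ₗ[R] N :=
  LinearMap.mk₂ R (fun u v => f (update (update x k u) l v))
    (fun u₁ u₂ v => by simp only [update_comm hkl, f.map_update_add])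
    (fun a u v => by simp only [update_comm hkl, f.map_update_smul])
    (fun u v₁ v₂ => f.map_update_add _ l v₁ v₂)
    (fun a u v => f.map_update_smul _ l a v)

theorem twoSlotBilin_apply (x : ι → M) {k l : ι} (hkl : k ≠ l) (u v : M) :
    f.twoSlotBilin x hkl u v = f (update (update x k u) l v) := rfl

theorem twoSlotBilin_apply_self (x : ι → M) {k l : ι} (hkl : k ≠ l) :
    f.twoSlotBilin x hkl (x k) (x l) = f x := by
  rw [twoSlotBilin_apply, update_eq_self, update_eq_self]

theorem twoSlotBilin_comm (hf : ∀ (σ : Equiv.Perm ι) (x : ι → M), f (x ∘ σ) = f x)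
    (x : ι → M) {k l : ι} (hkl : k ≠ l) (u v : M) :
    f.twoSlotBilin x hkl u v = f.twoSlotBilin x hkl v u := by
  rw [twoSlotBilin_apply, twoSlotBilin_apply, ← hf (Equiv.swap k l)]
  congr 1
  ext m
  simp only [comp_apply, update_apply, Equiv.swap_apply_def]
  split_ifs <;> simp_all

end MultilinearMap

namespace ContinuousMultilinearMap

variable {ι E : Type*} [Fintype ι] [DecidableEq ι] [NormedAddCommGroup E] [InnerProductSpace ℝ E]
  {f : ContinuousMultilinearMap ℝ (fun _ : ι => E) ℝ}

theorem exists_abs_eq_norm_sum_lt_of_ne (hf : ∀ (σ : Equiv.Perm ι) (x : ι → E), f (x ∘ σ) = f x)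
    {M : ℝ} (hM : ∀ y ∈ univ.pi fun _ => sphere (0 : E) 1, |f y| ≤ M)
    {x : ι → E} (hx : x ∈ univ.pi fun _ => sphere (0 : E) 1) (hxM : |f x| = M)
    {k l : ι} (hne : x k ≠ x l) :
    ∃ y ∈ univ.pi fun _ => sphere (0 : E) 1, |f y| = M ∧ ‖∑ m, x m‖ < ‖∑ m, y m‖ := by
  have hkl : k ≠ l := fun h => hne (congrArg x h)
  set B : LinearMap.BilinForm ℝ E := f.toMultilinearMap.twoSlotBilin x hkl
  have hsymm : B.IsSymm := ⟨f.toMultilinearMap.twoSlotBilin_comm hf x hkl⟩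
  have hmem : ∀ c : E, ‖c‖ = 1 → update (update x k c) l c ∈ univ.pi fun _ => sphere (0 : E) 1 :=
    fun c hc => (update_mem_pi_iff_of_mem ((update_mem_pi_iff_of_mem hx).2 fun _ => by simpa)).2
      fun _ => by simpa
  have hdiag : ∀ c : E, |B c c| ≤ M * ‖c‖ ^ 2 :=
    LinearMap.BilinForm.abs_apply_self_le_of_norm_eq_one fun c hc => hM _ (hmem c hc)
  have hB : |B (x k) (x l)| = M := by
    rw [MultilinearMap.twoSlotBilin_apply_self]; exact hxM
  have hxk : ‖x k‖ = 1 := by simpa using hx k (mem_univ k)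
  have hxl : ‖x l‖ = 1 := by simpa using hx l (mem_univ l)
  have hext : ∀ z, (z = x k + x l ∨ z = x k - x l) → |B z z| = M * ‖z‖ ^ 2 := by
    rintro z (rfl | rfl)
    · exact hsymm.abs_apply_add_add_eq_of_abs_apply_eq hdiag hxk hxl hB
    · have hneg : |B (x k) (-x l)| = M := by simpa using hB
      simpa [sub_eq_add_neg] using
        hsymm.abs_apply_add_add_eq_of_abs_apply_eq hdiag hxk (by simpa) hneg
  obtain ⟨a, z, hz, hc, hlt⟩ :=
    exists_norm_smul_eq_one_and_norm_add_lt (∑ m, x m - x k - x l) hxk hxl hne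
  refine ⟨update (update x k (a • z)) l (a • z), hmem _ hc, ?_, ?_⟩
  · change |B (a • z) (a • z)| = M
    have : |B (a • z) (a • z)| = M * ‖a • z‖ ^ 2 := by
      simp only [map_smul, LinearMap.smul_apply, smul_eq_mul, norm_smul, Real.norm_eq_abs, abs_mul,
        mul_pow, sq_abs, hext z hz]
      rw [← sq_abs a]
      ring
    rw [this, hc, one_pow, mul_one]
  · convert hlt using 2
    · abel
    · rw [Fintype.sum_update_eq_sub_add, Fintype.sum_update_eq_sub_add, update_of_ne hkl.symm]
      abel

theorem exists_isMaxOn_abs_const [FiniteDimensional ℝ E] [Nontrivial E]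
    (hf : ∀ (σ : Equiv.Perm ι) (x : ι → E), f (x ∘ σ) = f x) :
    ∃ e ∈ sphere (0 : E) 1,
      IsMaxOn (fun x => |f x|) (univ.pi fun _ => sphere (0 : E) 1) (const ι e) := by
  set S := univ.pi fun _ : ι => sphere (0 : E) 1
  have hS : IsCompact S := isCompact_univ_pi fun _ => isCompact_sphere 0 1
  have hsphere : (sphere (0 : E) 1).Nonempty := NormedSpace.sphere_nonempty.2 zero_le_one
  obtain ⟨x₀, hx₀, hmax⟩ := hS.exists_isMaxOn (univ_pi_nonempty_iff.2 fun _ => hsphere)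
    (continuous_abs.comp f.cont).continuousOn
  set K := S ∩ {x | |f x| = |f x₀|}
  have hK : IsCompact K :=
    hS.inter_right (isClosed_eq (continuous_abs.comp f.cont) continuous_const)
  obtain ⟨x, ⟨hxS, hxM⟩, hxmax⟩ := hK.exists_isMaxOn ⟨x₀, hx₀, rfl⟩
    (continuous_norm.comp (continuous_finsetSum _ fun m _ => continuous_apply m)).continuousOn
  have hconst : ∀ k l, x k = x l := by
    intro k l
    by_contra hne
    obtain ⟨y, hyS, hyM, hlt⟩ :=
      exists_abs_eq_norm_sum_lt_of_ne hf (fun y hy => hmax hy) hxS hxM hne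
    exact (hxmax ⟨hyS, hyM⟩).not_gt hlt
  obtain ⟨e, he, rfl⟩ : ∃ e ∈ sphere (0 : E) 1, x = const ι e := by
    rcases isEmpty_or_nonempty ι with hι | ⟨⟨k⟩⟩
    · exact ⟨hsphere.some, hsphere.some_mem, Subsingleton.elim _ _⟩
    · exact ⟨x k, hxS k (mem_univ k), funext fun l => hconst l k⟩
  exact ⟨e, he, fun y hy => (hmax hy).trans hxM.ge⟩

end ContinuousMultilinearMap

section Tensor

variable {ι κ : Type*} [Fintype ι] [DecidableEq ι] [Fintype κ]

noncomputable def tensorForm (T : (ι → κ) → ℝ) :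
    ContinuousMultilinearMap ℝ (fun _ : ι => EuclideanSpace ℝ κ) ℝ :=
  ∑ i, T i • (ContinuousMultilinearMap.mkPiAlgebra ℝ ι ℝ).compContinuousLinearMap
    fun k => EuclideanSpace.proj (i k)

theorem tensorForm_apply (T : (ι → κ) → ℝ) (x : ι → EuclideanSpace ℝ κ) :
    tensorForm T x = ∑ i, T i * ∏ k, x k (i k) := by
  simp [tensorForm]

theorem tensorForm_comp_perm {T : (ι → κ) → ℝ}
    (hT : ∀ (π : Equiv.Perm ι) (i : ι → κ), T (fun k => i (π k)) = T i)
    (σ : Equiv.Perm ι) (x : ι → EuclideanSpace ℝ κ) : tensorForm T (x ∘ σ) = tensorForm T x := by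
  rw [tensorForm_apply, tensorForm_apply]
  refine Fintype.sum_equiv (Equiv.arrowCongr σ (Equiv.refl κ)) _ _ fun i => ?_
  rw [← hT σ.symm i]
  congr 1
  simpa using Equiv.prod_comp σ fun k => x k (i (σ.symm k))

end Tensor

theorem EuclideanSpace.norm_toLp_eq_one_iff {κ : Type*} [Fintype κ] (v : κ → ℝ) :
    ‖WithLp.toLp 2 v‖ = 1 ↔ ∑ j, v j ^ 2 = 1 := by
  rw [← pow_eq_one_iff_of_nonneg (norm_nonneg _) two_ne_zero, EuclideanSpace.norm_sq_eq]
  simp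

theorem symmetric_injective_norm_eq_general (p d : ℕ) (hd : 1 ≤ d)
    (T : (Fin p → Fin d) → ℝ)
    (hsym : ∀ (π : Equiv.Perm (Fin p)) (i : Fin p → Fin d), T (fun k => i (π k)) = T i) :
    sSup {r : ℝ | ∃ x : Fin p → Fin d → ℝ,
        (∀ k, ∑ j, (x k j) ^ 2 = 1) ∧
        r = |∑ i : Fin p → Fin d, T i * ∏ k, x k (i k)|} =
    sSup {r : ℝ | ∃ x : Fin d → ℝ,
        (∑ j, (x j) ^ 2 = 1) ∧
        r = |∑ i : Fin p → Fin d, T i * ∏ k, x (i k)|} := by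
  have : Nonempty (Fin d) := ⟨⟨0, hd⟩⟩
  obtain ⟨e, he, hmax⟩ := (tensorForm T).exists_isMaxOn_abs_const (tensorForm_comp_perm hsym)
  have he' : ∑ j, e j ^ 2 = 1 := (EuclideanSpace.norm_toLp_eq_one_iff _).1 (by simpa using he)
  have hbound : ∀ x : Fin p → Fin d → ℝ, (∀ k, ∑ j, x k j ^ 2 = 1) →
      |∑ i : Fin p → Fin d, T i * ∏ k, x k (i k)| ≤ |tensorForm T (const _ e)| := by
    intro x hx
    have := hmax (a := fun k => WithLp.toLp 2 (x k))
      fun k _ => by simpa using (EuclideanSpace.norm_toLp_eq_one_iff _).2 (hx k)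
    simpa [tensorForm_apply] using this
  have h₁ : IsGreatest {r : ℝ | ∃ x : Fin p → Fin d → ℝ, (∀ k, ∑ j, (x k j) ^ 2 = 1) ∧
      r = |∑ i : Fin p → Fin d, T i * ∏ k, x k (i k)|} |tensorForm T (const _ e)| :=
    ⟨⟨fun _ => e, fun _ => he', by simp [tensorForm_apply]⟩,
      by rintro r ⟨x, hx, rfl⟩; exact hbound x hx⟩
  have h₂ : IsGreatest {r : ℝ | ∃ x : Fin d → ℝ, (∑ j, (x j) ^ 2 = 1) ∧
      r = |∑ i : Fin p → Fin d, T i * ∏ k, x (i k)|} |tensorForm T (const _ e)| :=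
    ⟨⟨e, he', by simp [tensorForm_apply]⟩, by rintro r ⟨x, hx, rfl⟩; exact hbound _ fun _ => hx⟩
  rw [h₁.csSup_eq, h₂.csSup_eq]

/-- (Banach / Kellogg–van der Corput–Schaake) For a real symmetric tensor
`T ∈ (ℝ^d)^{⊗p}`, the injective norm equals the maximum of `|⟨T, x⊗⋯⊗x⟩|` over a
single unit vector `x`. -/
theorem symmetric_injective_norm_eq (p d : ℕ) (hp : 1 ≤ p) (hd : 1 ≤ d)
    (T : (Fin p → Fin d) → ℝ)
    (hsym : ∀ (π : Equiv.Perm (Fin p)) (i : Fin p → Fin d), T (fun k => i (π k)) = T i) :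
    sSup {r : ℝ | ∃ x : Fin p → Fin d → ℝ,
        (∀ k, ∑ j, (x k j) ^ 2 = 1) ∧
        r = |∑ i : Fin p → Fin d, T i * ∏ k, x k (i k)|} =
    sSup {r : ℝ | ∃ x : Fin d → ℝ,
        (∑ j, (x j) ^ 2 = 1) ∧
        r = |∑ i : Fin p → Fin d, T i * ∏ k, x (i k)|} :=
  symmetric_injective_norm_eq_general p d hd T hsym
end

section
/- Let Ω(x) be the log-potential of the semicircle law: Ω(x) = x²/4 − 1/2 for |x| ≤ 2, and Ω(x) = x²/4 − 1/2 − [ (|x|/4)√(x²−4) − log(√(x²/4 − 1) + |x|/2) ] for |x| ≥ 2. For p > 2, define Σ_p(u) = (1 + log(p−1))/2 + Ω(u·√(p/(p−1))) − u²/2. Then Σ_p is an even, concave function of u, and there exists a unique positive real E₀(p) with Σ_p(E₀(p)) = 0. -/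
/-- The log-potential of the semicircle law on `[-2,2]`. -/
noncomputable def semicircleLogPotential (x : ℝ) : ℝ :=
  if |x| ≤ 2 then x ^ 2 / 4 - 1 / 2
  else x ^ 2 / 4 - 1 / 2 -
    (|x| / 4 * Real.sqrt (x ^ 2 - 4) - Real.log (Real.sqrt (x ^ 2 / 4 - 1) + |x| / 2))

/-- The function `Σ_p`. -/
noncomputable def SigmaP (p u : ℝ) : ℝ :=
  (1 + Real.log (p - 1)) / 2 +
    semicircleLogPotential (u * Real.sqrt (p / (p - 1))) - u ^ 2 / 2

/-!
Outside `[-2, 2]` the potential is `x²/4 - 1/2 - R(|x|)` with `R = semicircleCorrection`, and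
`R' y = √(y² - 4) / 2` is nonnegative and increasing, so `R` is convex and monotone on `[2, ∞)`
with `R 2 = 0`. Hence `Ω x = x²/4 - 1/2 - R (max |x| 2)` on all of `ℝ`, and
`Σ_p u = log (p - 1) / 2 - (p - 2) / (p - 1) · u² / 4 - R (max |c u| 2)` is a concave quadratic
minus a convex function. It is positive at `0` and negative for large `u`; a concave function
with these properties has exactly one positive zero, because its chord slopes from `0` decrease.
-/

open Set Real

theorem ConvexOn.comp_of_mapsTo {𝕜 E β : Type*} [Semiring 𝕜] [PartialOrder 𝕜]
    [AddCommMonoid E] [PartialOrder β] [AddCommMonoid β] [SMul 𝕜 E] [SMul 𝕜 β]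
    {s : Set E} {t : Set β} {f : E → β} {g : β → β}
    (hg : ConvexOn 𝕜 t g) (hf : ConvexOn 𝕜 s f) (hg' : MonotoneOn g t) (hst : MapsTo f s t) :
    ConvexOn 𝕜 s (g ∘ f) :=
  ⟨hf.1, fun _ hx _ hy _ _ ha hb hab =>
    (hg' (hst (hf.1 hx hy ha hb hab)) (hg.1 (hst hx) (hst hy) ha hb hab)
      (hf.2 hx hy ha hb hab)).trans (hg.2 (hst hx) (hst hy) ha hb hab)⟩

theorem ConcaveOn.existsUnique_pos_eq_zero {f : ℝ → ℝ} (hf : ConcaveOn ℝ univ f)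
    (h0 : 0 < f 0) {u : ℝ} (hu : 0 < u) (hfu : f u < 0) : ∃! x, 0 < x ∧ f x = 0 := by
  obtain ⟨x, ⟨hx, -⟩, hfx⟩ := intermediate_value_Ioo' hu.le
    ((hf.continuousOn isOpen_univ).mono (subset_univ _)) ⟨hfu, h0⟩
  have hle : ∀ y z, 0 < y → f y = 0 → 0 < z → f z = 0 → y ≤ z := fun y z hy hfy hz hfz => by
    by_contra! hzy
    have key := hf.slope_anti (mem_univ 0) ⟨mem_univ z, hz.ne'⟩ ⟨mem_univ y, hy.ne'⟩ hzy.le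
    simp only [slope_def_field, hfy, hfz, zero_sub, sub_zero, neg_div, neg_le_neg_iff] at key
    exact (div_lt_div_of_pos_left h0 hz hzy).not_ge key
  exact ⟨x, ⟨hx, hfx⟩, fun y ⟨hy, hfy⟩ => (hle y x hy hfy hx hfx).antisymm (hle x y hx hfx hy hfy)⟩

noncomputable def semicircleCorrection (y : ℝ) : ℝ :=
  y / 4 * √(y ^ 2 - 4) - log (√(y ^ 2 / 4 - 1) + y / 2)

theorem hasDerivAt_semicircleCorrection {y : ℝ} (hy : 2 < y) :
    HasDerivAt semicircleCorrection (√(y ^ 2 - 4) / 2) y := by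
  have hT : semicircleCorrection =
      fun y => y / 4 * √(y ^ 2 - 4) - log ((√(y ^ 2 - 4) + y) / 2) := by
    ext y
    rw [semicircleCorrection, show y ^ 2 / 4 - 1 = (y ^ 2 - 4) / 2 ^ 2 by ring,
      sqrt_div' _ (by positivity), sqrt_sq zero_le_two, add_div]
  have hpos : 0 < y ^ 2 - 4 := by nlinarith
  have hs0 : 0 < √(y ^ 2 - 4) := sqrt_pos.2 hpos
  have hs2 : √(y ^ 2 - 4) ^ 2 = y ^ 2 - 4 := sq_sqrt hpos.le
  have hs : HasDerivAt (fun y => √(y ^ 2 - 4)) (y / √(y ^ 2 - 4)) y := by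
    convert ((hasDerivAt_pow 2 y).sub_const 4).sqrt hpos.ne' using 1
    field_simp; ring
  have hlog : HasDerivAt (fun y => log ((√(y ^ 2 - 4) + y) / 2)) (1 / √(y ^ 2 - 4)) y := by
    have harg : HasDerivAt (fun y => (√(y ^ 2 - 4) + y) / 2) ((y / √(y ^ 2 - 4) + 1) / 2) y :=
      (hs.add (hasDerivAt_id y)).div_const 2
    convert harg.log (by positivity) using 1
    field_simp
    ring
  have hprod : HasDerivAt (fun y => y / 4 * √(y ^ 2 - 4))
      (1 / 4 * √(y ^ 2 - 4) + y / 4 * (y / √(y ^ 2 - 4))) y :=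
    ((hasDerivAt_id y).div_const 4).mul hs
  rw [hT]
  refine (hprod.sub hlog).congr_deriv ?_
  field_simp
  linear_combination (-2) * hs2

theorem semicircleCorrection_two : semicircleCorrection 2 = 0 := by
  norm_num [semicircleCorrection]

theorem continuousOn_semicircleCorrection : ContinuousOn semicircleCorrection (Ici 2) := by
  refine (by fun_prop : ContinuousOn (fun y : ℝ => y / 4 * √(y ^ 2 - 4)) _).sub
    (ContinuousOn.log (by fun_prop) fun y (hy : 2 ≤ y) => ?_)
  have := sqrt_nonneg (y ^ 2 / 4 - 1)
  positivity

theorem differentiableOn_semicircleCorrection :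
    DifferentiableOn ℝ semicircleCorrection (interior (Ici 2)) := by
  rw [interior_Ici]
  exact fun y hy => (hasDerivAt_semicircleCorrection hy).differentiableAt.differentiableWithinAt

theorem monotoneOn_semicircleCorrection : MonotoneOn semicircleCorrection (Ici 2) :=
  monotoneOn_of_deriv_nonneg (convex_Ici 2) continuousOn_semicircleCorrection
    differentiableOn_semicircleCorrection fun y hy => by
      rw [interior_Ici] at hy
      rw [(hasDerivAt_semicircleCorrection hy).deriv]
      positivity

theorem convexOn_semicircleCorrection : ConvexOn ℝ (Ici 2) semicircleCorrection :=
  MonotoneOn.convexOn_of_deriv (convex_Ici 2) continuousOn_semicircleCorrection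
    differentiableOn_semicircleCorrection fun y hy z hz hyz => by
      rw [interior_Ici] at hy hz
      rw [(hasDerivAt_semicircleCorrection hy).deriv, (hasDerivAt_semicircleCorrection hz).deriv]
      gcongr
      nlinarith [mem_Ioi.1 hy]

theorem semicircleCorrection_nonneg {y : ℝ} (hy : 2 ≤ y) : 0 ≤ semicircleCorrection y :=
  semicircleCorrection_two ▸ monotoneOn_semicircleCorrection (mem_Ici.2 le_rfl) hy hy

theorem semicircleLogPotential_eq (x : ℝ) :
    semicircleLogPotential x = x ^ 2 / 4 - 1 / 2 - semicircleCorrection (max |x| 2) := by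
  unfold semicircleLogPotential
  split_ifs with h
  · rw [max_eq_right h, semicircleCorrection_two, sub_zero]
  · rw [max_eq_left (not_le.1 h).le, semicircleCorrection, sq_abs]

theorem semicircleLogPotential_neg (x : ℝ) :
    semicircleLogPotential (-x) = semicircleLogPotential x := by
  rw [semicircleLogPotential_eq, semicircleLogPotential_eq, abs_neg, neg_sq]

theorem convexOn_semicircleCorrection_max_abs_mul (c : ℝ) :
    ConvexOn ℝ univ fun u => semicircleCorrection (max |u * c| 2) := by
  have habs : ConvexOn ℝ univ fun u : ℝ => |c| * |u| := by
    simpa [Real.norm_eq_abs] using (convexOn_univ_norm (E := ℝ)).smul (abs_nonneg c)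
  refine convexOn_semicircleCorrection.comp_of_mapsTo ?_ monotoneOn_semicircleCorrection
    fun u _ => mem_Ici.2 (le_max_right _ _)
  refine (habs.sup (convexOn_const 2 convex_univ)).congr fun u _ => ?_
  simp only [Pi.sup_apply, abs_mul, mul_comm |c|]

theorem SigmaP_neg (p u : ℝ) : SigmaP p (-u) = SigmaP p u := by
  rw [SigmaP, SigmaP, neg_mul, semicircleLogPotential_neg, neg_sq]

section SigmaP

variable {p : ℝ}

theorem SigmaP_eq (hp : 1 < p) (u : ℝ) :
    SigmaP p u = log (p - 1) / 2 - (p - 2) / (p - 1) * u ^ 2 / 4 -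
      semicircleCorrection (max |u * √(p / (p - 1))| 2) := by
  have hp1 : 0 < p - 1 := by linarith
  rw [SigmaP, semicircleLogPotential_eq, mul_pow, sq_sqrt (by positivity)]
  field_simp
  ring

theorem SigmaP_zero (hp : 1 < p) : SigmaP p 0 = log (p - 1) / 2 := by
  rw [SigmaP_eq hp]
  norm_num [semicircleCorrection_two]

theorem concaveOn_SigmaP (hp : 2 ≤ p) : ConcaveOn ℝ univ (SigmaP p) := by
  have hm : 0 ≤ (p - 2) / (p - 1) / 4 := by
    have : 0 ≤ (p - 2) / (p - 1) := div_nonneg (by linarith) (by linarith)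
    positivity
  refine ((concaveOn_const (log (p - 1) / 2) convex_univ).sub
    (((even_two.convexOn_pow (𝕜 := ℝ)).smul hm).add
      (convexOn_semicircleCorrection_max_abs_mul √(p / (p - 1))))).congr fun u _ => ?_
  simp only [SigmaP_eq (by linarith : 1 < p) u, Pi.sub_apply, Pi.add_apply, smul_eq_mul]
  ring

theorem exists_pos_SigmaP_neg (hp : 2 < p) : ∃ u, 0 < u ∧ SigmaP p u < 0 := by
  set m := (p - 2) / (p - 1)
  have hm : 0 < m := div_pos (by linarith) (by linarith)
  have hL : 0 < log (p - 1) := log_pos (by linarith)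
  refine ⟨2 * √(log (p - 1) / m), by positivity, ?_⟩
  have hquad : m * (2 * √(log (p - 1) / m)) ^ 2 / 4 = log (p - 1) := by
    rw [mul_pow, sq_sqrt (by positivity)]
    field_simp
    ring
  rw [SigmaP_eq (by linarith), hquad]
  linarith [semicircleCorrection_nonneg (le_max_right |2 * √(log (p - 1) / m) * √(p / (p - 1))| 2)]

end SigmaP

/-- For `p > 2`, `Σ_p` is even and concave, and has a unique positive zero `E₀(p)`. -/
theorem sigmaP_even_concave_unique_positive_zero (p : ℝ) (hp : 2 < p) :
    (∀ u : ℝ, SigmaP p (-u) = SigmaP p u) ∧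
    ConcaveOn ℝ Set.univ (SigmaP p) ∧
    (∃! E : ℝ, 0 < E ∧ SigmaP p E = 0) := by
  have hconc := concaveOn_SigmaP hp.le
  obtain ⟨u, hu, hSu⟩ := exists_pos_SigmaP_neg hp
  have h0 : 0 < SigmaP p 0 := by
    rw [SigmaP_zero (by linarith)]
    exact half_pos (log_pos (by linarith))
  exact ⟨SigmaP_neg p, hconc, hconc.existsUnique_pos_eq_zero h0 hu hSu⟩
end

section
/- With Σ_p and E₀(p) as above, for every p ≥ 2 one has E₀(p) ≥ 2√((p−1)/p), with strict inequality for p ≥ 3. -/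
theorem Real.two_mul_sub_one_div_add_one_lt_log {t : ℝ} (ht : 1 < t) :
    2 * (t - 1) / (t + 1) < Real.log t := by
  have ht' : 0 < t - 1 := sub_pos.mpr ht
  have hterm_pos : ∀ k : ℕ,
      0 < (2 : ℝ) * (1 / (2 * k + 1)) * ((t - 1) / (t - 1 + 2)) ^ (2 * k + 1) :=
    fun k ↦ by positivity
  have h := lt_hasSum (Real.hasSum_log_one_add ht'.le) 0 (fun j _ ↦ (hterm_pos j).le) 1
    one_ne_zero (hterm_pos 1)
  rw [add_sub_cancel] at h
  refine lt_of_eq_of_lt ?_ h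
  norm_num
  ring

theorem semicircleLogPotential_of_abs_le {x : ℝ} (hx : |x| ≤ 2) :
    semicircleLogPotential x = x ^ 2 / 4 - 1 / 2 :=
  if_pos hx

theorem SigmaP_of_abs_le_edge {p u : ℝ} (hp : 1 < p) (hu : |u| ≤ 2 * √((p - 1) / p)) :
    SigmaP p u = Real.log (p - 1) / 2 - (p - 2) / (p - 1) * u ^ 2 / 4 := by
  have hq : 0 < p - 1 := sub_pos.mpr hp
  have hscale : √((p - 1) / p) * √(p / (p - 1)) = 1 := by
    rw [← Real.sqrt_mul (by positivity), show (p - 1) / p * (p / (p - 1)) = 1 by field_simp,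
      Real.sqrt_one]
  have hinside : |u * √(p / (p - 1))| ≤ 2 := by
    rw [abs_mul, abs_of_nonneg (Real.sqrt_nonneg _)]
    calc |u| * √(p / (p - 1)) ≤ 2 * √((p - 1) / p) * √(p / (p - 1)) := by gcongr
      _ = 2 := by rw [mul_assoc, hscale, mul_one]
  rw [SigmaP, semicircleLogPotential_of_abs_le hinside, mul_pow, Real.sq_sqrt (by positivity)]
  field_simp
  ring

theorem edge_lt_of_SigmaP_eq_zero {p E : ℝ} (hp : 2 < p) (hE : 0 < E) (hzero : SigmaP p E = 0) :
    2 * √((p - 1) / p) < E := by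
  by_contra! hle
  have hq : 0 < p - 1 := by linarith
  have hE_sq : E ^ 2 * (p - 2) = 2 * (p - 1) * Real.log (p - 1) := by
    have := SigmaP_of_abs_le_edge (by linarith) ((abs_of_pos hE).trans_le hle)
    rw [hzero, eq_comm, sub_eq_zero] at this
    field_simp [hq.ne'] at this
    linarith
  have hlog := Real.two_mul_sub_one_div_add_one_lt_log (t := p - 1) (by linarith)
  have hedge_sq : (2 * √((p - 1) / p)) ^ 2 < E ^ 2 := by
    rw [mul_pow, Real.sq_sqrt (by positivity)]
    refine lt_of_mul_lt_mul_right ?_ (by linarith : (0:ℝ) ≤ p - 2)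
    rw [hE_sq]
    calc 2 ^ 2 * ((p - 1) / p) * (p - 2) = 2 * (p - 1) * (2 * (p - 1 - 1) / (p - 1 + 1)) := by
          field_simp; ring
      _ < 2 * (p - 1) * Real.log (p - 1) := by gcongr
  exact (pow_le_pow_left₀ hE.le hle 2).not_gt hedge_sq

theorem E0_ge_edge_general (p E : ℝ)
    (hE : (p = 2 ∧ E = Real.sqrt 2) ∨ (2 < p ∧ 0 < E ∧ SigmaP p E = 0)) :
    2 * Real.sqrt ((p - 1) / p) ≤ E ∧ (3 ≤ p → 2 * Real.sqrt ((p - 1) / p) < E) := by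
  rcases hE with ⟨rfl, rfl⟩ | ⟨hp, hE, hzero⟩
  · refine ⟨le_of_eq ?_, fun h ↦ by norm_num at h⟩
    rw [show ((2 : ℝ) - 1) / 2 = 2⁻¹ by norm_num, Real.sqrt_inv]
    field_simp
    exact (Real.sq_sqrt zero_le_two).symm
  · have hedge := edge_lt_of_SigmaP_eq_zero hp hE hzero
    exact ⟨hedge.le, fun _ ↦ hedge⟩

/-- For every `p ≥ 2`, `E₀(p) ≥ 2√((p-1)/p)`, with strict inequality for `p ≥ 3`.
Here `E₀(p)` is the unique positive zero of `Σ_p` for `p > 2`, with the convention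
`E₀(2) = √2`. -/
theorem E0_ge_edge (p E : ℝ) (hp : 2 ≤ p)
    (hE : (p = 2 ∧ E = Real.sqrt 2) ∨ (2 < p ∧ 0 < E ∧ SigmaP p E = 0)) :
    2 * Real.sqrt ((p - 1) / p) ≤ E ∧ (3 ≤ p → 2 * Real.sqrt ((p - 1) / p) < E) :=
  E0_ge_edge_general p E hE
end

section
/- With E₀(p) the unique positive zero of Σ_p(u) = (1+log(p−1))/2 + Ω(u√(p/(p−1))) − u²/2 (p ≥ 3), one has lim_{p→∞} E₀(p)/√(log p) = 1. -/
lemma omega_eq {x : ℝ} (hx : 2 ≤ x) :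
    semicircleLogPotential x =
      x / (x + Real.sqrt (x ^ 2 - 4)) - 1 / 2 +
        Real.log ((x + Real.sqrt (x ^ 2 - 4)) / 2) := by
  have hx0 : 0 < x := by linarith
  have habs : |x| = x := abs_of_pos hx0
  have h4 : 0 ≤ x ^ 2 - 4 := by nlinarith
  have hs0 : 0 ≤ Real.sqrt (x ^ 2 - 4) := Real.sqrt_nonneg _
  have hs2 : Real.sqrt (x ^ 2 - 4) ^ 2 = x ^ 2 - 4 := Real.sq_sqrt h4
  set s := Real.sqrt (x ^ 2 - 4) with hs
  have hsx : s ≤ x := by nlinarith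
  have hxs : 0 < x + s := by linarith
  unfold semicircleLogPotential
  rw [habs]
  split_ifs with h
  · have hx2 : x = 2 := le_antisymm h hx
    subst hx2
    simp [hs]
    norm_num
  · have hhalf : Real.sqrt (x ^ 2 / 4 - 1) = s / 2 := by
      rw [show x ^ 2 / 4 - 1 = (s / 2) ^ 2 by nlinarith, Real.sqrt_sq (by positivity)]
    rw [hhalf]
    have hlog : s / 2 + x / 2 = (x + s) / 2 := by ring
    rw [hlog]
    have key : x ^ 2 / 4 - x / 4 * s = x / (x + s) := by
      field_simp
      nlinarith [hs2]
    linarith [key]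

lemma ratio_bounds {q : ℝ} (hq : 3 ≤ q) :
    1 ≤ Real.sqrt (q / (q - 1)) ∧ Real.sqrt (q / (q - 1)) ≤ 2 := by
  have h1 : (1 : ℝ) ≤ q / (q - 1) := by
    rw [le_div_iff₀ (by linarith)]; linarith
  constructor
  · exact Real.one_le_sqrt.mpr h1
  · rw [show (2:ℝ) = Real.sqrt 4 by
      rw [show (4:ℝ) = 2 ^ 2 by norm_num, Real.sqrt_sq (by norm_num)]]
    apply Real.sqrt_le_sqrt
    rw [div_le_iff₀ (by linarith)]; linarith

lemma sigma_upper {q u : ℝ} (hq : 3 ≤ q) (hu : 2 ≤ u) :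
    SigmaP q u ≤ Real.log q / 2 + 2 + Real.log u - u ^ 2 / 2 := by
  obtain ⟨hr1, hr2⟩ := ratio_bounds hq
  set r := Real.sqrt (q / (q - 1)) with hr
  set x := u * r with hxdef
  have hux : u ≤ x := by nlinarith
  have hx2 : 2 ≤ x := by linarith
  have hx0 : 0 < x := by linarith
  have h4 : 0 ≤ x ^ 2 - 4 := by nlinarith
  have hs0 : 0 ≤ Real.sqrt (x ^ 2 - 4) := Real.sqrt_nonneg _
  have hs2 : Real.sqrt (x ^ 2 - 4) ^ 2 = x ^ 2 - 4 := Real.sq_sqrt h4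
  set s := Real.sqrt (x ^ 2 - 4) with hs
  have hsx : s ≤ x := by nlinarith
  have hxs : 0 < x + s := by linarith
  rw [SigmaP, ← hr, ← hxdef, omega_eq hx2, ← hs]
  have h1 : x / (x + s) ≤ 1 := by
    rw [div_le_one hxs]; linarith
  have h2 : Real.log ((x + s) / 2) ≤ Real.log u + 1 := by
    have hle : (x + s) / 2 ≤ 2 * u := by nlinarith
    calc Real.log ((x + s) / 2) ≤ Real.log (2 * u) :=
          Real.log_le_log (by positivity) hle
      _ = Real.log 2 + Real.log u := Real.log_mul (by norm_num) (by linarith)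
      _ ≤ Real.log u + 1 := by
          have := Real.log_le_sub_one_of_pos (show (0:ℝ) < 2 by norm_num)
          linarith
  have h3 : Real.log (q - 1) ≤ Real.log q := Real.log_le_log (by linarith) (by linarith)
  linarith

lemma sigma_lower {q u : ℝ} (hq : 3 ≤ q) (hu : 0 < u) :
    Real.log (q - 1) / 2 - u ^ 2 / 2 ≤ SigmaP q u := by
  obtain ⟨hr1, hr2⟩ := ratio_bounds hq
  set r := Real.sqrt (q / (q - 1)) with hr
  set x := u * r with hxdef
  have hx0 : 0 < x := by nlinarith
  rcases le_or_gt x 2 with h | h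
  · rw [SigmaP, ← hr, ← hxdef]
    unfold semicircleLogPotential
    rw [if_pos (by rw [abs_of_pos hx0]; exact h)]
    nlinarith [sq_nonneg x]
  · have hx2 : (2:ℝ) ≤ x := le_of_lt h
    have h4 : 0 ≤ x ^ 2 - 4 := by nlinarith
    have hs0 : 0 ≤ Real.sqrt (x ^ 2 - 4) := Real.sqrt_nonneg _
    set s := Real.sqrt (x ^ 2 - 4) with hs
    have hxs : 0 < x + s := by linarith
    rw [SigmaP, ← hr, ← hxdef, omega_eq hx2, ← hs]
    have h1 : 0 ≤ x / (x + s) := by positivity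
    have h2 : 0 ≤ Real.log ((x + s) / 2) := Real.log_nonneg (by linarith)
    linarith

lemma log_sub_sq_anti {u v : ℝ} (hu : 1 ≤ u) (huv : u ≤ v) :
    Real.log v - v ^ 2 / 2 ≤ Real.log u - u ^ 2 / 2 := by
  have hu0 : 0 < u := by linarith
  have hv0 : 0 < v := by linarith
  have h1 : Real.log v - Real.log u ≤ v / u - 1 := by
    have := Real.log_le_sub_one_of_pos (show 0 < v / u by positivity)
    rwa [Real.log_div (ne_of_gt hv0) (ne_of_gt hu0)] at this
  have h2 : v / u - 1 ≤ v - u := by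
    rw [div_sub_one (ne_of_gt hu0), div_le_iff₀ hu0]
    nlinarith
  nlinarith [mul_nonneg (sub_nonneg.mpr huv) (show (0:ℝ) ≤ v + u - 2 by linarith)]

set_option maxHeartbeats 1000000 in
/-- With `E₀(p)` the unique positive zero of `Σ_p` (for `p ≥ 3`), one has
`lim_{p→∞} E₀(p)/√(log p) = 1`. -/
theorem E0_asymptotics (E : ℕ → ℝ)
    (hE : ∀ p : ℕ, 3 ≤ p → 0 < E p ∧ SigmaP p (E p) = 0) :
    Filter.Tendsto (fun p : ℕ => E p / Real.sqrt (Real.log p))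
      Filter.atTop (nhds 1) := by
  rw [Metric.tendsto_nhds]
  intro ε hε
  set δ := min ε (1/2) with hδdef
  have hδ0 : 0 < δ := lt_min hε (by norm_num)
  have hδε : δ ≤ ε := min_le_left _ _
  have hδh : δ ≤ 1/2 := min_le_right _ _
  clear_value δ
  have hlog : Filter.Tendsto (fun p : ℕ => Real.log p) Filter.atTop Filter.atTop :=
    Real.tendsto_log_atTop.comp tendsto_natCast_atTop_atTop
  filter_upwards [hlog.eventually_ge_atTop (16 / δ ^ 2),
    Filter.eventually_ge_atTop 3] with p hL hp3
  set L := Real.log p with hLdef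
  clear_value L
  have hq3 : (3 : ℝ) ≤ (p : ℝ) := by exact_mod_cast hp3
  have h16 : 16 ≤ δ ^ 2 * L := by
    rw [div_le_iff₀ (by positivity)] at hL; linarith
  have hδL : 16 / δ ≤ δ * L := by
    rw [div_le_iff₀ hδ0]; nlinarith
  have hL64 : 64 ≤ L := by
    have : (16:ℝ) / δ ^ 2 ≥ 64 := by
      rw [ge_iff_le, le_div_iff₀ (by positivity)]
      nlinarith
    linarith
  have hL0 : 0 < L := by linarith
  have hsL0 : 0 < Real.sqrt L := Real.sqrt_pos.mpr hL0
  have hsL : 4 / δ ≤ Real.sqrt L := by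
    rw [show (4:ℝ)/δ = Real.sqrt ((4/δ)^2) by rw [Real.sqrt_sq (by positivity)]]
    apply Real.sqrt_le_sqrt
    rw [div_pow]
    norm_num
    exact hL
  have hsL8 : 8 ≤ Real.sqrt L := by
    have : (8:ℝ) ≤ 4 / δ := by
      rw [le_div_iff₀ hδ0]; linarith
    linarith
  have hsqL : Real.sqrt L ^ 2 = L := Real.sq_sqrt (le_of_lt hL0)
  obtain ⟨hEpos, hEzero⟩ := hE p hp3
  -- lower bound
  have hlow : (1 - δ) * Real.sqrt L < E p := by
    by_contra hcon
    push_neg at hcon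
    have hB := sigma_lower hq3 hEpos
    rw [hEzero] at hB
    -- log(q-1) ≤ E p ^ 2 ≤ (1-δ)^2 L
    have hE2 : E p ^ 2 ≤ (1 - δ) ^ 2 * L := by
      have h1 : E p ^ 2 ≤ ((1 - δ) * Real.sqrt L) ^ 2 := by
        apply pow_le_pow_left₀ (le_of_lt hEpos) hcon
      nlinarith [h1, hsqL]
    have hlogq : L - 1 ≤ Real.log ((p:ℝ) - 1) := by
      have h2 : Real.log ((p:ℝ) / 2) ≤ Real.log ((p:ℝ) - 1) :=
        Real.log_le_log (by linarith) (by linarith)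
      have h3 : Real.log ((p:ℝ) / 2) = L - Real.log 2 := by
        rw [hLdef, Real.log_div (by linarith) (by norm_num)]
      have h4 : Real.log 2 ≤ 1 := by
        have := Real.log_le_sub_one_of_pos (show (0:ℝ) < 2 by norm_num)
        linarith
      linarith
    -- contradiction: (1-δ)^2 L ≥ L - 1 forces δ L small
    have hd : 2 * (δ * L) - δ * δ * L ≤ 1 := by nlinarith
    have h32 : (32:ℝ) ≤ 16 / δ := by
      rw [le_div_iff₀ hδ0]; linarith
    have hδ2L : δ * δ * L ≤ (1/2) * (δ * L) := by
      nlinarith [mul_nonneg hδ0.le hL0.le]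
    linarith
  -- upper bound
  have hup : E p < (1 + δ) * Real.sqrt L := by
    by_contra hcon
    push_neg at hcon
    have hu1 : (1:ℝ) ≤ (1 + δ) * Real.sqrt L := by nlinarith [hsL8, hδ0.le]
    have hu2 : (2:ℝ) ≤ E p := by nlinarith [hsL8, hδ0.le]
    have hA := sigma_upper hq3 hu2
    rw [hEzero] at hA
    rw [← hLdef] at hA
    have hC := log_sub_sq_anti hu1 hcon
    have hu1pos : 0 < (1 + δ) * Real.sqrt L := by positivity
    have hlogu1 : Real.log ((1 + δ) * Real.sqrt L) ≤ (1 + δ) * Real.sqrt L - 1 := by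
      have := Real.log_le_sub_one_of_pos hu1pos
      linarith
    have hu1le : (1 + δ) * Real.sqrt L ≤ 2 * Real.sqrt L := by
      nlinarith [hsL0.le, hδh]
    have hu1sq : (1 + 2*δ) * L ≤ ((1 + δ) * Real.sqrt L) ^ 2 := by
      nlinarith [hsqL, mul_nonneg (mul_nonneg hδ0.le hδ0.le) hL0.le]
    have hδL2 : 4 * Real.sqrt L ≤ δ * L := by
      have h4 : 4 ≤ δ * Real.sqrt L := by
        have := mul_le_mul_of_nonneg_left hsL hδ0.le
        have he : δ * (4/δ) = 4 := by field_simp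
        linarith [he ▸ this]
      have heq : δ * Real.sqrt L * Real.sqrt L = δ * L := by
        calc δ * Real.sqrt L * Real.sqrt L = δ * Real.sqrt L ^ 2 := by ring
          _ = δ * L := by rw [hsqL]
      nlinarith [mul_le_mul_of_nonneg_right h4 hsL0.le]
    nlinarith [hA, hC, hlogu1, hu1le, hu1sq, hδL2, hsL8]
  -- conclude
  have h1 : E p / Real.sqrt L < 1 + δ := by
    rw [div_lt_iff₀ hsL0]; nlinarith
  have h2 : 1 - δ < E p / Real.sqrt L := by
    rw [lt_div_iff₀ hsL0]; nlinarith
  rw [Real.dist_eq, abs_sub_lt_iff]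
  constructor <;> [linarith; linarith]
end

section
/- Let Ω be the log-potential of the semicircle law and for a constant β > 1/2 consider the equation (log p)/2 + β + Ω(γ) − γ²/2 = 0 in γ > 0. For every integer p ≥ 1 this equation has a unique positive solution γ(p), and as p → ∞, γ(p) = √(log p) + (log log p)/(2√(log p)) + β/√(log p) + o(1/√(log p)). -/
/-!
Under the Joukowski substitution `γ = s + s⁻¹`, `s ≥ 1`, the potential becomes
`Ω(γ) = log s + 1 / (2 s²)`, so `γ² / 2 - Ω(γ) = s² / 2 - log s + 1`, which is strictly increasing
in `s`; on `[0, 2]` it is `γ² / 4 + 1 / 2`. Hence the equation has exactly one positive root, and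
for large `p` it reads `s² - 2 log s = log p + 2β - 2`. Then `s² ~ log p`, so
`2 log s = log log p + o(1)`, and `γ² = s² + 2 + s⁻²` matches the square of the claimed expansion
up to `o(1)`; dividing by `γ + expansion ≥ √(log p)` gives the error `o(1 / √(log p))`.
-/

open Filter Real Set Topology

lemma semicircleLogPotential_of_two_le_abs {x : ℝ} (h : 2 ≤ |x|) :
    semicircleLogPotential x = x ^ 2 / 4 - 1 / 2 -
      (|x| / 4 * √(x ^ 2 - 4) - log (√(x ^ 2 / 4 - 1) + |x| / 2)) := by
  unfold semicircleLogPotential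
  split_ifs with h2
  · have hx : |x| = 2 := le_antisymm h2 h
    have hx2 : x ^ 2 = 4 := by rw [← sq_abs, hx]; norm_num
    simp [hx, hx2]
  · rfl

lemma semicircleLogPotential_add_inv {s : ℝ} (hs : 1 ≤ s) :
    semicircleLogPotential (s + s⁻¹) = log s + (s ^ 2)⁻¹ / 2 := by
  have hs0 : 0 < s := by linarith
  have hinv : s⁻¹ ≤ s := (inv_le_one_of_one_le₀ hs).trans hs
  have habs : |s + s⁻¹| = s + s⁻¹ := abs_of_pos (by positivity)
  have hsqrt : √((s + s⁻¹) ^ 2 - 4) = s - s⁻¹ := by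
    rw [show (s + s⁻¹) ^ 2 - 4 = (s - s⁻¹) ^ 2 by field_simp; ring, sqrt_sq (by linarith)]
  have hsqrt' : √((s + s⁻¹) ^ 2 / 4 - 1) = (s - s⁻¹) / 2 := by
    rw [show (s + s⁻¹) ^ 2 / 4 - 1 = ((s - s⁻¹) / 2) ^ 2 by field_simp; ring,
      sqrt_sq (by linarith)]
  have h2 : 2 ≤ |s + s⁻¹| := by
    rw [habs, ← sub_nonneg, show s + s⁻¹ - 2 = (s - 1) ^ 2 / s by field_simp; ring]
    positivity
  rw [semicircleLogPotential_of_two_le_abs h2, habs, hsqrt, hsqrt',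
    show (s - s⁻¹) / 2 + (s + s⁻¹) / 2 = s by ring]
  field_simp
  ring

noncomputable def halfSqSubPotential (x : ℝ) : ℝ := x ^ 2 / 2 - semicircleLogPotential x

lemma halfSqSubPotential_of_abs_le_two {x : ℝ} (h : |x| ≤ 2) :
    halfSqSubPotential x = x ^ 2 / 4 + 1 / 2 := by
  rw [halfSqSubPotential, semicircleLogPotential, if_pos h]
  ring

lemma halfSqSubPotential_add_inv {s : ℝ} (hs : 1 ≤ s) :
    halfSqSubPotential (s + s⁻¹) = s ^ 2 / 2 - log s + 1 := by
  have hs0 : s ≠ 0 := by positivity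
  rw [halfSqSubPotential, semicircleLogPotential_add_inv hs]
  field_simp
  ring

lemma strictMonoOn_sq_div_two_sub_log :
    StrictMonoOn (fun s : ℝ => s ^ 2 / 2 - log s) (Ici 1) := by
  intro s (hs : 1 ≤ s) t _ hst
  have hs0 : 0 < s := by linarith
  have hlog : log t - log s ≤ (t - s) / s := by
    rw [← log_div (by linarith) hs0.ne', sub_div, div_self hs0.ne']
    exact log_le_sub_one_of_pos (div_pos (by linarith) hs0)
  have hdiv : (t - s) / s ≤ t - s := div_le_self (by linarith) hs
  nlinarith

/-- The inverse of the Joukowski map `s ↦ s + s⁻¹` on `[1, ∞)`. -/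
noncomputable def joukowskiInv (γ : ℝ) : ℝ := (γ + √(γ ^ 2 - 4)) / 2

lemma one_le_joukowskiInv {γ : ℝ} (h : 2 ≤ γ) : 1 ≤ joukowskiInv γ := by
  have := sqrt_nonneg (γ ^ 2 - 4)
  unfold joukowskiInv
  linarith

lemma joukowskiInv_add_inv {γ : ℝ} (h : 2 ≤ γ) : joukowskiInv γ + (joukowskiInv γ)⁻¹ = γ := by
  have hsq : √(γ ^ 2 - 4) ^ 2 = γ ^ 2 - 4 := sq_sqrt (by nlinarith)
  have hpos : joukowskiInv γ ≠ 0 := by linarith [one_le_joukowskiInv h]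
  have hprod : joukowskiInv γ * (γ - joukowskiInv γ) = 1 := by
    unfold joukowskiInv
    nlinarith
  rw [← eq_sub_iff_add_eq', inv_eq_of_mul_eq_one_right hprod]

lemma joukowskiInv_strictMonoOn : StrictMonoOn joukowskiInv (Ici 2) := by
  intro a (ha : 2 ≤ a) b _ hab
  have : √(a ^ 2 - 4) ≤ √(b ^ 2 - 4) := sqrt_le_sqrt (by nlinarith)
  unfold joukowskiInv
  linarith

lemma halfSqSubPotential_of_two_le {γ : ℝ} (h : 2 ≤ γ) :
    halfSqSubPotential γ = joukowskiInv γ ^ 2 / 2 - log (joukowskiInv γ) + 1 := by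
  conv_lhs => rw [← joukowskiInv_add_inv h]
  exact halfSqSubPotential_add_inv (one_le_joukowskiInv h)

lemma halfSqSubPotential_strictMonoOn : StrictMonoOn halfSqSubPotential (Ici 0) := by
  have hsmall : StrictMonoOn halfSqSubPotential (Icc 0 2) := by
    intro a ⟨ha, ha2⟩ b ⟨hb, hb2⟩ hab
    rw [halfSqSubPotential_of_abs_le_two (abs_le.2 ⟨by linarith, ha2⟩),
      halfSqSubPotential_of_abs_le_two (abs_le.2 ⟨by linarith, hb2⟩)]
    nlinarith
  have hlarge : StrictMonoOn halfSqSubPotential (Ici 2) := by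
    intro a (ha : 2 ≤ a) b (hb : 2 ≤ b) hab
    rw [halfSqSubPotential_of_two_le ha, halfSqSubPotential_of_two_le hb, add_lt_add_iff_right]
    exact strictMonoOn_sq_div_two_sub_log (one_le_joukowskiInv ha) (one_le_joukowskiInv hb)
      (joukowskiInv_strictMonoOn ha hb hab)
  rw [← Icc_union_Ici_eq_Ici zero_le_two]
  exact hsmall.union hlarge (isGreatest_Icc zero_le_two) isLeast_Ici

lemma exists_halfSqSubPotential_eq {t : ℝ} (ht : 1 / 2 < t) :
    ∃ γ, 0 < γ ∧ halfSqSubPotential γ = t := by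
  rcases le_or_gt t (3 / 2) with ht' | ht'
  · refine ⟨2 * √(t - 1 / 2), by positivity, ?_⟩
    have h1 : √(t - 1 / 2) ≤ 1 := sqrt_le_one.2 (by linarith)
    have h0 := sqrt_nonneg (t - 1 / 2)
    rw [halfSqSubPotential_of_abs_le_two (abs_le.2 ⟨by linarith, by linarith⟩), mul_pow,
      sq_sqrt (by linarith)]
    ring
  · have hcont : ContinuousOn (fun s : ℝ => s ^ 2 / 2 - log s) (Icc 1 (t + 1)) :=
      (continuousOn_pow 2).div_const 2 |>.sub <|
        continuousOn_log.mono fun x hx => ne_of_gt (lt_of_lt_of_le one_pos hx.1)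
    have hmem : t - 1 ∈ Icc ((1 : ℝ) ^ 2 / 2 - log 1) ((t + 1) ^ 2 / 2 - log (t + 1)) := by
      have := log_le_sub_one_of_pos (show 0 < t + 1 by linarith)
      constructor <;> norm_num <;> nlinarith
    obtain ⟨s, ⟨hs, -⟩, hst⟩ := intermediate_value_Icc (by linarith) hcont hmem
    refine ⟨s + s⁻¹, by positivity, ?_⟩
    rw [halfSqSubPotential_add_inv hs]
    linarith [hst]

lemma two_lt_of_three_halves_lt_halfSqSubPotential {γ : ℝ} (hγ : 0 ≤ γ)
    (h : 3 / 2 < halfSqSubPotential γ) : 2 < γ := by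
  by_contra! h2
  rw [halfSqSubPotential_of_abs_le_two (abs_le.2 ⟨by linarith, h2⟩)] at h
  nlinarith

lemma tendsto_log_div_two_add_sq_div_atTop (b : ℝ) :
    Tendsto (fun x : ℝ => (log x / 2 + b) ^ 2 / x) atTop (𝓝 0) := by
  have h2 : Tendsto (fun x : ℝ => log x ^ 2 / x) atTop (𝓝 0) := by
    simpa using tendsto_pow_log_div_mul_add_atTop 1 0 2 one_ne_zero
  have h1 : Tendsto (fun x : ℝ => log x / x) atTop (𝓝 0) := by
    simpa using tendsto_pow_log_div_mul_add_atTop 1 0 1 one_ne_zero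
  have h0 : Tendsto (fun x : ℝ => x⁻¹) atTop (𝓝 0) := tendsto_inv_atTop_zero
  have := ((h2.div_const 4).add (h1.const_mul b)).add (h0.const_mul (b ^ 2))
  rw [zero_div, mul_zero, mul_zero, add_zero, add_zero] at this
  refine this.congr' ?_
  filter_upwards [eventually_ne_atTop 0] with x hx
  field_simp
  ring

section Asymptotics

variable {α : Type*} {l : Filter α}

lemma tendsto_sub_mul_of_tendsto_sq_sub_sq {x y r : α → ℝ}
    (hr : ∀ᶠ a in l, 0 ≤ r a ∧ r a ≤ x a + y a)
    (h : Tendsto (fun a => x a ^ 2 - y a ^ 2) l (𝓝 0)) :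
    Tendsto (fun a => (x a - y a) * r a) l (𝓝 0) := by
  refine squeeze_zero_norm' ?_ (by simpa using h.abs)
  filter_upwards [hr] with a ⟨hr0, hrxy⟩
  calc ‖(x a - y a) * r a‖ = |x a - y a| * r a := by
        rw [norm_mul, norm_eq_abs, norm_eq_abs, abs_of_nonneg hr0]
    _ ≤ |x a - y a| * (x a + y a) := mul_le_mul_of_nonneg_left hrxy (abs_nonneg _)
    _ = |x a ^ 2 - y a ^ 2| := by
        rw [sq_sub_sq, abs_mul, abs_of_nonneg (hr0.trans hrxy), mul_comm]

variable {L s : α → ℝ} {c : ℝ}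

lemma tendsto_sq_atTop_of_sq_sub_two_log_eq (hL : Tendsto L l atTop)
    (hs : ∀ᶠ a in l, 1 ≤ s a ∧ s a ^ 2 - 2 * log (s a) = L a + c) :
    Tendsto (fun a => s a ^ 2) l atTop := by
  refine tendsto_atTop_mono' l ?_ (tendsto_atTop_add_const_right l c hL)
  filter_upwards [hs] with a ⟨hs1, heq⟩
  linarith [log_nonneg hs1]

lemma tendsto_log_sub_two_log_of_sq_sub_two_log_eq (hL : Tendsto L l atTop)
    (hs : ∀ᶠ a in l, 1 ≤ s a ∧ s a ^ 2 - 2 * log (s a) = L a + c) :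
    Tendsto (fun a => log (L a) - 2 * log (s a)) l (𝓝 0) := by
  have hu := tendsto_sq_atTop_of_sq_sub_two_log_eq hL hs
  -- `L / s² = 1 - (log s² + c) / s²`, and `log u / u → 0`
  have hratio : Tendsto (fun a => L a / s a ^ 2) l (𝓝 1) := by
    have hlog : Tendsto (fun u : ℝ => log u / u) atTop (𝓝 0) := by
      simpa using tendsto_pow_log_div_mul_add_atTop 1 0 1 one_ne_zero
    have := (tendsto_const_nhds (x := (1 : ℝ))).sub
      ((hlog.comp hu).add ((tendsto_const_nhds (x := c)).div_atTop hu))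
    rw [add_zero, sub_zero] at this
    refine this.congr' ?_
    filter_upwards [hs] with a ⟨hs1, heq⟩
    have hs0 : s a ≠ 0 := by positivity
    simp only [Function.comp_apply, log_pow, Nat.cast_ofNat]
    field_simp
    linarith
  have := ((continuousAt_log one_ne_zero).tendsto.comp hratio)
  rw [log_one] at this
  refine this.congr' ?_
  filter_upwards [hs, hL.eventually_gt_atTop 0] with a hsa hL0
  simp only [Function.comp_apply]
  rw [log_div hL0.ne' (by nlinarith [hsa.1]), log_pow, Nat.cast_ofNat]

theorem tendsto_add_inv_sub_expansion_mul_sqrt (β : ℝ) (hL : Tendsto L l atTop)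
    (hs : ∀ᶠ a in l, 1 ≤ s a ∧ s a ^ 2 - 2 * log (s a) = L a + (2 * β - 2)) :
    Tendsto (fun a => (s a + (s a)⁻¹ - √(L a) - log (L a) / (2 * √(L a)) - β / √(L a))
      * √(L a)) l (𝓝 0) := by
  set A : α → ℝ := fun a => √(L a) + (log (L a) / 2 + β) / √(L a)
  have hsq_sub_sq : ∀ r σ ℓ : ℝ, r ≠ 0 → σ ≠ 0 → σ ^ 2 - 2 * log σ = r ^ 2 + (2 * β - 2) →
      -(ℓ - 2 * log σ) + (σ ^ 2)⁻¹ - (ℓ / 2 + β) ^ 2 / r ^ 2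
        = (σ + σ⁻¹) ^ 2 - (r + (ℓ / 2 + β) / r) ^ 2 := by
    intro r σ ℓ hr hσ h
    field_simp
    linear_combination (-4 * r ^ 2 * σ ^ 2) * h
  have hsq : Tendsto (fun a => (s a + (s a)⁻¹) ^ 2 - A a ^ 2) l (𝓝 0) := by
    have := ((tendsto_log_sub_two_log_of_sq_sub_two_log_eq hL hs).neg.add
      (tendsto_sq_atTop_of_sq_sub_two_log_eq hL hs).inv_tendsto_atTop).sub
      ((tendsto_log_div_two_add_sq_div_atTop β).comp hL)
    rw [neg_zero, add_zero, sub_zero] at this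
    refine this.congr' ?_
    filter_upwards [hs, hL.eventually_gt_atTop 0] with a ⟨hs1, heq⟩ hL0
    have hr0 : √(L a) ≠ 0 := (sqrt_pos.2 hL0).ne'
    have := hsq_sub_sq (√(L a)) (s a) (log (L a)) hr0 (by positivity)
      (by rw [sq_sqrt hL0.le]; exact heq)
    rw [sq_sqrt hL0.le] at this
    exact this
  have hr : ∀ᶠ a in l, 0 ≤ √(L a) ∧ √(L a) ≤ s a + (s a)⁻¹ + A a := by
    filter_upwards [hs, (tendsto_log_atTop.comp hL).eventually_ge_atTop (-2 * β)]
      with a hsa hlogL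
    have : 0 ≤ (log (L a) / 2 + β) / √(L a) :=
      div_nonneg (by rw [Function.comp_apply] at hlogL; linarith) (sqrt_nonneg _)
    exact ⟨sqrt_nonneg _, by simp only [A]; linarith [inv_pos.2 (zero_lt_one.trans_le hsa.1)]⟩
  refine (tendsto_sub_mul_of_tendsto_sq_sub_sq hr hsq).congr fun a => ?_
  simp only [A]
  ring

end Asymptotics

/-- For `β > 1/2`, the equation `(log p)/2 + β + Ω(γ) − γ²/2 = 0` has a unique positive
solution `γ(p)` for every `p ≥ 1`, and
`γ(p) = √(log p) + (log log p)/(2√(log p)) + β/√(log p) + o(1/√(log p))` as `p → ∞`. -/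
theorem gamma_unique_and_asymptotics (β : ℝ) (hβ : 1 / 2 < β) :
    (∀ p : ℕ, 1 ≤ p → ∃! γ : ℝ, 0 < γ ∧
        Real.log p / 2 + β + semicircleLogPotential γ - γ ^ 2 / 2 = 0) ∧
    (∀ γ : ℕ → ℝ,
      (∀ p : ℕ, 1 ≤ p → 0 < γ p ∧
        Real.log p / 2 + β + semicircleLogPotential (γ p) - (γ p) ^ 2 / 2 = 0) →
      Filter.Tendsto (fun p : ℕ =>
          (γ p - Real.sqrt (Real.log p)
            - Real.log (Real.log p) / (2 * Real.sqrt (Real.log p))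
            - β / Real.sqrt (Real.log p)) * Real.sqrt (Real.log p))
        Filter.atTop (nhds 0)) := by
  have hroot_iff (p : ℕ) (γ : ℝ) : log p / 2 + β + semicircleLogPotential γ - γ ^ 2 / 2 = 0 ↔
      halfSqSubPotential γ = log p / 2 + β := by
    rw [halfSqSubPotential]
    constructor <;> intro h <;> linarith
  refine ⟨fun p _ => ?_, fun γ hγ => ?_⟩
  · obtain ⟨γ₀, hγ₀, hF⟩ :=
      exists_halfSqSubPotential_eq (t := log p / 2 + β) (by linarith [log_natCast_nonneg p])
    refine ⟨γ₀, ⟨hγ₀, (hroot_iff p γ₀).2 hF⟩, fun y ⟨hy, hyeq⟩ => ?_⟩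
    refine halfSqSubPotential_strictMonoOn.injOn hy.le hγ₀.le ?_
    rw [(hroot_iff p y).1 hyeq, hF]
  · have hL : Tendsto (fun p : ℕ => log p) atTop atTop :=
      tendsto_log_atTop.comp tendsto_natCast_atTop_atTop
    have hlarge : ∀ᶠ p in atTop, 2 < γ p ∧ halfSqSubPotential (γ p) = log p / 2 + β := by
      filter_upwards [hL.eventually_ge_atTop 2, eventually_ge_atTop 1] with p hlog hp
      obtain ⟨hpos, heq⟩ := hγ p hp
      have hF := (hroot_iff p _).1 heq
      exact ⟨two_lt_of_three_halves_lt_halfSqSubPotential hpos.le (by linarith), hF⟩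
    refine (tendsto_add_inv_sub_expansion_mul_sqrt β hL
      (s := fun p => joukowskiInv (γ p)) ?_).congr' ?_
    · filter_upwards [hlarge] with p ⟨h2, hF⟩
      rw [halfSqSubPotential_of_two_le h2.le] at hF
      exact ⟨one_le_joukowskiInv h2.le, by linarith⟩
    · filter_upwards [hlarge] with p hp
      rw [joukowskiInv_add_inv hp.1.le]
end

section
/- For u ≥ 2, log(u) − 1/u ≤ Ω(u) ≤ log(u), where Ω(u) = u²/4 − 1/2 − [(u/4)√(u²−4) − log(√(u²/4−1)+u/2)] is the log-potential of the semicircle law. -/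
lemma key_bounds (t : ℝ) (ht : 1 ≤ t) :
    Real.log (t + 1/t) - 1/(t + 1/t) ≤ Real.log t + 1/(2*t^2) ∧
      Real.log t + 1/(2*t^2) ≤ Real.log (t + 1/t) := by
  have ht0 : (0:ℝ) < t := lt_of_lt_of_le one_pos ht
  have hs0 : (0:ℝ) < 1/t^2 := by positivity
  have hs1 : 1/t^2 ≤ 1 := by
    rw [div_le_one (by positivity)]; nlinarith
  have hsplit : t + 1/t = t * (1 + 1/t^2) := by field_simp
  have hlog : Real.log (t + 1/t) = Real.log t + Real.log (1 + 1/t^2) := by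
    rw [hsplit, Real.log_mul (ne_of_gt ht0) (by positivity)]
  constructor
  · -- lower bound: log(1+s) ≤ s ≤ 1/(t+1/t) + s/2
    have h1 : Real.log (1 + 1/t^2) ≤ 1/t^2 := by
      have := Real.log_le_sub_one_of_pos (show (0:ℝ) < 1 + 1/t^2 by positivity)
      linarith
    have h2 : 1/(2*t^2) ≤ 1/(t + 1/t) := by
      have hts : t + 1/t = (t^2+1)/t := by field_simp
      rw [hts]
      apply one_div_le_one_div_of_le (by positivity)
      rw [div_le_iff₀ ht0]
      nlinarith
    rw [hlog]
    have : 1/t^2 ≤ 1/(t+1/t) + 1/(2*t^2) := by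
      have : 1/t^2 = 1/(2*t^2) + 1/(2*t^2) := by ring
      linarith
    linarith
  · -- upper bound: 1/(2t²) ≤ log(1+s) since log(1+s) ≥ s/(1+s) ≥ s/2
    have h1 : 1 - 1/(1 + 1/t^2) ≤ Real.log (1 + 1/t^2) := by
      have h := Real.log_le_sub_one_of_pos (show (0:ℝ) < 1/(1 + 1/t^2) by positivity)
      rw [Real.log_div one_ne_zero (by positivity), Real.log_one] at h
      linarith
    have h2 : 1/(2*t^2) ≤ 1 - 1/(1 + 1/t^2) := by
      have hq : (0:ℝ) < 1 + 1/t^2 := by positivity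
      rw [← sub_nonneg]
      have : 1 - 1/(1 + 1/t^2) - 1/(2*t^2) = (1 - 1/t^2)/(2*t^2*(1+1/t^2)) := by
        field_simp; ring
      rw [this]
      apply div_nonneg (by linarith) (by positivity)
    rw [hlog]; linarith

/-- For `u ≥ 2`, `log(u) − 1/u ≤ Ω(u) ≤ log(u)`. -/
theorem semicircleLogPotential_bounds (u : ℝ) (hu : 2 ≤ u) :
    Real.log u - 1 / u ≤ semicircleLogPotential u ∧
      semicircleLogPotential u ≤ Real.log u := by
  have hu0 : (0:ℝ) < u := by linarith
  have habs : |u| = u := abs_of_pos hu0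
  rcases eq_or_lt_of_le hu with heq | hlt
  · -- u = 2
    subst heq
    have : semicircleLogPotential 2 = 1/2 := by
      simp [semicircleLogPotential]; norm_num
    rw [this]
    have h2 := Real.log_two_gt_d9
    have h3 := Real.log_le_sub_one_of_pos (show (0:ℝ) < 2 by norm_num)
    constructor <;> [linarith; linarith]
  · -- u > 2
    have hd : (0:ℝ) ≤ u^2 - 4 := by nlinarith
    set r := Real.sqrt (u^2 - 4) with hr
    have hr0 : 0 ≤ r := Real.sqrt_nonneg _
    have hr2 : r^2 = u^2 - 4 := Real.sq_sqrt hd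
    set t := (u + r)/2 with htdef
    have ht1 : 1 ≤ t := by
      rw [htdef]; linarith
    have ht0 : (0:ℝ) < t := lt_of_lt_of_le one_pos ht1
    have hinv : 1/t = (u - r)/2 := by
      rw [htdef, div_eq_div_iff (by positivity) two_ne_zero]
      nlinarith
    have hsum : t + 1/t = u := by rw [hinv, htdef]; ring
    have hdiff : t - 1/t = r := by rw [hinv, htdef]; ring
    have hsq : Real.sqrt (u^2/4 - 1) = r/2 := by
      have h4 : u^2/4 - 1 = (r/2)^2 := by nlinarith
      rw [h4, Real.sqrt_sq (by positivity)]
    have harg : Real.sqrt (u^2/4 - 1) + |u|/2 = t := by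
      rw [hsq, habs, htdef]; ring
    have hval : semicircleLogPotential u = Real.log t + 1/(2*t^2) := by
      rw [semicircleLogPotential, if_neg (by rw [habs]; linarith), harg, habs, ← hr]
      have : u/4 * r = ((t+1/t) * (t - 1/t))/4 := by rw [hsum, hdiff]; ring
      rw [this, ← hsum]
      have : ((t+1/t)^2/4 - 1/2 - ((t+1/t)*(t-1/t)/4 - Real.log t)) =
          Real.log t + 1/(2*t^2) := by field_simp; ring
      linarith [this]
    rw [hval, ← hsum]
    exact key_bounds t ht1
end

section
/- Let S(u) = Ω(u) − u²/2, where Ω is the log-potential of the semicircle law, and let (γ_p) be a sequence tending to infinity with γ_p = o(exp(p^{1−δ})) for some δ > 0, with γ_p ≥ 2. Set N = p(d−1) for fixed d ≥ 2. Then (1/N)·log ∫_{γ_p}^∞ e^{N·S(u)} du − S(γ_p) → 0 as p → ∞. -/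
/-!
On `[2, ∞)` the log-potential satisfies `Ω' = (u - √(u² - 4)) / 2 ∈ [0, u - 1]`, so
`S = Ω - u² / 2` decreases with slope between `-u` and `-1`. Slope at most `-1` bounds the
tail `∫_a^∞ e^{N S}` above by `e^{N S(a)} / N`; slope at least `-u` keeps `N S` within `2` of
`N S(a)` on the window `(a, a + 1 / (N a)]`, bounding the tail below by `e^{N S(a) - 2} / (N a)`.
Hence `(1/N) log ∫_a^∞ e^{N S} - S(a)` lies in `[-(log N + log a + 2) / N, 0]`, and the
hypothesis on `γ_p` gives `log γ_p ≤ p^{1-δ}` eventually, so the lower end tends to `0`.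
-/

open MeasureTheory

open Real Set Filter Topology

section LaplaceTail

variable {f : ℝ → ℝ} {a N : ℝ}

lemma exp_mul_le_of_antitoneOn (hf : AntitoneOn (fun u => f u + u) (Ici a)) (hN : 0 ≤ N)
    {u : ℝ} (hu : a ≤ u) : exp (N * f u) ≤ exp (N * (f a + a)) * exp (-N * u) := by
  rw [← exp_add, exp_le_exp]
  have := hf self_mem_Ici hu hu
  nlinarith

lemma integrableOn_exp_mul_Ioi_of_antitoneOn (hf : AntitoneOn (fun u => f u + u) (Ici a))
    (hN : 0 < N) : IntegrableOn (fun u => exp (N * f u)) (Ioi a) := by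
  have hf_meas : AEMeasurable f (volume.restrict (Ioi a)) := by
    simpa only [Pi.sub_def, id_eq, add_sub_cancel_right] using
      (aemeasurable_restrict_of_antitoneOn measurableSet_Ioi
        (hf.mono Ioi_subset_Ici_self)).sub aemeasurable_id
  refine ((integrableOn_exp_mul_Ioi (neg_lt_zero.2 hN) a).const_mul
    (exp (N * (f a + a)))).mono' (hf_meas.const_mul N).exp.aestronglyMeasurable ?_
  filter_upwards [ae_restrict_mem measurableSet_Ioi] with u hu
  rw [norm_of_nonneg (exp_pos _).le]
  exact exp_mul_le_of_antitoneOn hf hN.le hu.le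

lemma setIntegral_exp_mul_Ioi_le (hf : AntitoneOn (fun u => f u + u) (Ici a)) (hN : 0 < N) :
    ∫ u in Ioi a, exp (N * f u) ≤ exp (N * f a) / N := by
  calc ∫ u in Ioi a, exp (N * f u)
      ≤ ∫ u in Ioi a, exp (N * (f a + a)) * exp (-N * u) :=
        setIntegral_mono_on (integrableOn_exp_mul_Ioi_of_antitoneOn hf hN)
          ((integrableOn_exp_mul_Ioi (neg_lt_zero.2 hN) a).const_mul _) measurableSet_Ioi
          fun u hu => exp_mul_le_of_antitoneOn hf hN.le (le_of_lt hu)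
    _ = exp (N * f a) / N := by
        rw [integral_const_mul, integral_exp_mul_Ioi (neg_lt_zero.2 hN), neg_div_neg_eq,
          mul_div_assoc', ← exp_add]
        ring_nf

lemma exp_mul_sub_two_div_le_setIntegral_exp_mul_Ioi
    (hf : AntitoneOn (fun u => f u + u) (Ici a))
    (hg : MonotoneOn (fun u => f u + u ^ 2 / 2) (Ici a)) (ha : 1 ≤ a) (hN : 1 ≤ N) :
    exp (N * f a - 2) / (N * a) ≤ ∫ u in Ioi a, exp (N * f u) := by
  have hNa : 1 ≤ N * a := by nlinarith
  set ε := 1 / (N * a) with hε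
  have hε0 : 0 < ε := by positivity
  have hwindow : ∀ u ∈ Ioc a (a + ε), exp (N * f a - 2) ≤ exp (N * f u) := by
    rintro u ⟨hau, hu⟩
    have hmono : f a + a ^ 2 / 2 ≤ f u + u ^ 2 / 2 := hg self_mem_Ici hau.le hau.le
    have hε1 : ε ≤ 1 := by rw [hε, div_le_one (by linarith)]; exact hNa
    have hquad : N * ((u - a) * (u + a)) ≤ 3 :=
      calc N * ((u - a) * (u + a)) ≤ N * (ε * (2 * a + 1)) := by
            gcongr N * ?_
            exact mul_le_mul (by linarith) (by linarith) (by linarith) hε0.le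
        _ = 2 * (N * ε * a) + N * ε := by ring
        _ ≤ 3 := by rw [hε]; field_simp; linarith
    rw [exp_le_exp]
    nlinarith
  have hint := integrableOn_exp_mul_Ioi_of_antitoneOn hf (by linarith : 0 < N)
  calc exp (N * f a - 2) / (N * a)
      = exp (N * f a - 2) * volume.real (Ioc a (a + ε)) := by
        rw [Real.volume_real_Ioc_of_le (by linarith), add_sub_cancel_left, hε, mul_one_div]
    _ ≤ ∫ u in Ioc a (a + ε), exp (N * f u) :=
        setIntegral_ge_of_const_le_real measurableSet_Ioc measure_Ioc_lt_top.ne hwindow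
          (hint.mono_set Ioc_subset_Ioi_self)
    _ ≤ ∫ u in Ioi a, exp (N * f u) :=
        setIntegral_mono_set hint (Eventually.of_forall fun u => (exp_pos _).le)
          Ioc_subset_Ioi_self.eventuallyLE

lemma one_div_mul_log_setIntegral_exp_mul_Ioi_sub_mem_Icc
    (hf : AntitoneOn (fun u => f u + u) (Ici a))
    (hg : MonotoneOn (fun u => f u + u ^ 2 / 2) (Ici a)) (ha : 1 ≤ a) (hN : 1 ≤ N) :
    1 / N * log (∫ u in Ioi a, exp (N * f u)) - f a ∈ Icc (-((log N + log a + 2) / N)) 0 := by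
  have hN0 : 0 < N := by linarith
  have hlower := exp_mul_sub_two_div_le_setIntegral_exp_mul_Ioi hf hg ha hN
  have hupper := setIntegral_exp_mul_Ioi_le hf hN0
  have hI : 0 < ∫ u in Ioi a, exp (N * f u) := lt_of_lt_of_le (by positivity) hlower
  have hlog_lower := log_le_log (by positivity) hlower
  have hlog_upper := log_le_log hI hupper
  rw [log_div (exp_ne_zero _) (by positivity), log_exp, log_mul (by positivity) (by positivity)]
    at hlog_lower
  rw [log_div (exp_ne_zero _) hN0.ne', log_exp] at hlog_upper
  have hlogN : 0 ≤ log N := log_nonneg hN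
  rw [show 1 / N * log (∫ u in Ioi a, exp (N * f u)) - f a
      = (log (∫ u in Ioi a, exp (N * f u)) - N * f a) / N by field_simp, ← neg_div]
  exact ⟨by gcongr; linarith, div_nonpos_of_nonpos_of_nonneg (by linarith) hN0.le⟩

end LaplaceTail

lemma tendsto_log_add_rpow_add_div_atTop {c δ : ℝ} (hc : 0 < c) (hδ : 0 < δ) :
    Tendsto (fun x : ℝ => (log (x * c) + x ^ (1 - δ) + 2) / (x * c)) atTop (𝓝 0) := by
  have hlin : Tendsto (fun x : ℝ => x * c) atTop atTop := tendsto_id.atTop_mul_const hc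
  have hlog : Tendsto (fun x : ℝ => log (x * c) / (x * c)) atTop (𝓝 0) := by
    simpa [Function.comp_def] using (tendsto_pow_log_div_mul_add_atTop 1 0 1 one_ne_zero).comp hlin
  have hrpow : Tendsto (fun x : ℝ => x ^ (1 - δ) / (x * c)) atTop (𝓝 0) := by
    refine (by simpa using (tendsto_rpow_neg_atTop hδ).div_const c :
      Tendsto (fun x : ℝ => x ^ (-δ) / c) atTop (𝓝 0)).congr' ?_
    filter_upwards [eventually_gt_atTop 0] with x hx
    rw [sub_eq_neg_add, rpow_add hx, rpow_one]
    field_simp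
  have hconst : Tendsto (fun x : ℝ => 2 / (x * c)) atTop (𝓝 0) :=
    tendsto_const_nhds.div_atTop hlin
  simpa only [add_div, add_zero] using (hlog.add hrpow).add hconst

noncomputable def semicircleLogPotentialOutside (u : ℝ) : ℝ :=
  u ^ 2 / 4 - 1 / 2 - u / 4 * √(u ^ 2 - 4) + log ((u + √(u ^ 2 - 4)) / 2)

lemma semicircleLogPotential_eq_outside {u : ℝ} (hu : 2 ≤ u) :
    semicircleLogPotential u = semicircleLogPotentialOutside u := by
  unfold semicircleLogPotential semicircleLogPotentialOutside
  rw [abs_of_nonneg (by linarith)]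
  rcases hu.eq_or_lt with rfl | hu
  · norm_num
  · have hsqrt : √(u ^ 2 / 4 - 1) = √(u ^ 2 - 4) / 2 := by
      rw [show u ^ 2 / 4 - 1 = (u ^ 2 - 4) / 2 ^ 2 by ring, sqrt_div' _ (by norm_num),
        sqrt_sq (by norm_num)]
    rw [if_neg (by linarith), hsqrt]
    ring_nf

lemma hasDerivAt_semicircleLogPotentialOutside {u : ℝ} (hu : 2 < u) :
    HasDerivAt semicircleLogPotentialOutside ((u - √(u ^ 2 - 4)) / 2) u := by
  have hpos : 0 < u ^ 2 - 4 := by nlinarith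
  have hr0 : 0 < √(u ^ 2 - 4) := sqrt_pos.2 hpos
  have hr2 : √(u ^ 2 - 4) ^ 2 = u ^ 2 - 4 := sq_sqrt hpos.le
  have hsqrt : HasDerivAt (fun x => √(x ^ 2 - 4)) (u / √(u ^ 2 - 4)) u := by
    refine (((hasDerivAt_pow 2 u).sub_const 4).sqrt hpos.ne').congr_deriv ?_
    field_simp
    ring
  have hlog : HasDerivAt (fun x => log ((x + √(x ^ 2 - 4)) / 2)) (1 / √(u ^ 2 - 4)) u := by
    have hsum : HasDerivAt (fun x => (x + √(x ^ 2 - 4)) / 2) ((1 + u / √(u ^ 2 - 4)) / 2) u :=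
      ((hasDerivAt_id' u).add hsqrt).div_const 2
    refine (hsum.log (by positivity)).congr_deriv ?_
    field_simp
    ring
  refine (((((hasDerivAt_pow 2 u).div_const 4).sub_const (1 / 2)).sub
    (((hasDerivAt_id' u).div_const 4).mul hsqrt)).add hlog).congr_deriv ?_
  field_simp
  linear_combination 2 * hr2

lemma hasDerivAt_semicircleLogPotential {u : ℝ} (hu : 2 < u) :
    HasDerivAt semicircleLogPotential ((u - √(u ^ 2 - 4)) / 2) u :=
  (hasDerivAt_semicircleLogPotentialOutside hu).congr_of_eventuallyEq <|
    (eventually_gt_nhds hu).mono fun _ hx => semicircleLogPotential_eq_outside hx.le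

lemma continuousOn_semicircleLogPotential_Ici : ContinuousOn semicircleLogPotential (Ici 2) := by
  refine ContinuousOn.congr ?_ fun u hu => semicircleLogPotential_eq_outside hu
  refine ContinuousOn.add (by fun_prop) (ContinuousOn.log (by fun_prop) fun u (hu : 2 ≤ u) => ?_)
  have := sqrt_nonneg (u ^ 2 - 4)
  positivity

lemma sqrt_sq_sub_four_le {u : ℝ} (hu : 2 ≤ u) : √(u ^ 2 - 4) ≤ u :=
  sqrt_le_iff.2 ⟨by linarith, by linarith⟩

lemma monotoneOn_semicircleLogPotential : MonotoneOn semicircleLogPotential (Ici 2) := by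
  refine monotoneOn_of_hasDerivWithinAt_nonneg (convex_Ici 2)
    continuousOn_semicircleLogPotential_Ici
    (fun u hu => (hasDerivAt_semicircleLogPotential (interior_Ici.subset hu)).hasDerivWithinAt)
    fun u hu => ?_
  have hu2 : 2 < u := interior_Ici.subset hu
  linarith [sqrt_sq_sub_four_le hu2.le]

lemma antitoneOn_semicircleLogPotential_sub_sq_add :
    AntitoneOn (fun u => semicircleLogPotential u - u ^ 2 / 2 + u) (Ici 2) := by
  refine antitoneOn_of_hasDerivWithinAt_nonpos (convex_Ici 2)
    ((continuousOn_semicircleLogPotential_Ici.sub (by fun_prop)).add (by fun_prop))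
    (fun u hu => ((((hasDerivAt_semicircleLogPotential (interior_Ici.subset hu)).sub
      ((hasDerivAt_pow 2 u).div_const 2)).add (hasDerivAt_id' u))).hasDerivWithinAt)
    fun u hu => ?_
  have hu2 : 2 < u := interior_Ici.subset hu
  simp only [Nat.cast_ofNat, Nat.add_one_sub_one, pow_one]
  linarith [sqrt_nonneg (u ^ 2 - 4)]

lemma one_div_mul_log_setIntegral_exp_semicircle_sub_mem_Icc {a N : ℝ} (ha : 2 ≤ a)
    (hN : 1 ≤ N) :
    1 / N * log (∫ u in Ioi a, exp (N * (semicircleLogPotential u - u ^ 2 / 2))) -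
        (semicircleLogPotential a - a ^ 2 / 2) ∈ Icc (-((log N + log a + 2) / N)) 0 := by
  have hsub : Ici a ⊆ Ici 2 := Ici_subset_Ici.2 ha
  refine one_div_mul_log_setIntegral_exp_mul_Ioi_sub_mem_Icc
    (antitoneOn_semicircleLogPotential_sub_sq_add.mono hsub) ?_ (by linarith) hN
  simpa only [sub_add_cancel] using monotoneOn_semicircleLogPotential.mono hsub

theorem laplace_tail_asymptotics_general (d : ℕ) (hd : 2 ≤ d) (δ : ℝ) (hδ : 0 < δ)
    (γ : ℕ → ℝ) (hγ2 : ∀ p, 2 ≤ γ p)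
    (hγo : γ =o[Filter.atTop] fun p : ℕ => Real.exp ((p : ℝ) ^ (1 - δ))) :
    Filter.Tendsto (fun p : ℕ =>
        (1 / ((p : ℝ) * ((d : ℝ) - 1))) *
          Real.log (∫ u in Set.Ioi (γ p),
            Real.exp ((p : ℝ) * ((d : ℝ) - 1) *
              (semicircleLogPotential u - u ^ 2 / 2)))
        - (semicircleLogPotential (γ p) - (γ p) ^ 2 / 2))
      Filter.atTop (nhds 0) := by
  have hd1 : 1 ≤ (d : ℝ) - 1 := by
    have : (2 : ℝ) ≤ d := by exact_mod_cast hd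
    linarith
  have hlog_γ : ∀ᶠ p : ℕ in atTop, log (γ p) ≤ (p : ℝ) ^ (1 - δ) := by
    filter_upwards [hγo.bound one_pos] with p hp
    rw [norm_of_nonneg (by linarith [hγ2 p]), norm_of_nonneg (exp_pos _).le, one_mul] at hp
    rwa [log_le_iff_le_exp (by linarith [hγ2 p])]
  have hlower := ((tendsto_log_add_rpow_add_div_atTop (c := (d : ℝ) - 1) (by linarith) hδ).comp
    tendsto_natCast_atTop_atTop).neg
  rw [neg_zero] at hlower
  have hN : ∀ᶠ p : ℕ in atTop, 1 ≤ (p : ℝ) * ((d : ℝ) - 1) := by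
    filter_upwards [eventually_ge_atTop 1] with p hp
    exact one_le_mul_of_one_le_of_one_le (by exact_mod_cast hp) hd1
  refine tendsto_of_tendsto_of_tendsto_of_le_of_le' hlower tendsto_const_nhds ?_ ?_
  · filter_upwards [hlog_γ, hN] with p hp hNp
    refine le_trans ?_ (one_div_mul_log_setIntegral_exp_semicircle_sub_mem_Icc (hγ2 p) hNp).1
    simp only [Function.comp_apply, neg_le_neg_iff]
    gcongr
  · filter_upwards [hN] with p hNp
      using (one_div_mul_log_setIntegral_exp_semicircle_sub_mem_Icc (hγ2 p) hNp).2

/-- With `S(u) = Ω(u) − u²/2` and `γ_p → ∞`, `γ_p ≥ 2`, `γ_p = o(exp(p^{1−δ}))`,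
for fixed `d ≥ 2` and `N = p(d−1)`:
`(1/N) log ∫_{γ_p}^∞ e^{N S(u)} du − S(γ_p) → 0` as `p → ∞`. -/
theorem laplace_tail_asymptotics (d : ℕ) (hd : 2 ≤ d) (δ : ℝ) (hδ : 0 < δ)
    (γ : ℕ → ℝ) (hγ2 : ∀ p, 2 ≤ γ p)
    (hγ : Filter.Tendsto γ Filter.atTop Filter.atTop)
    (hγo : γ =o[Filter.atTop] fun p : ℕ => Real.exp ((p : ℝ) ^ (1 - δ))) :
    Filter.Tendsto (fun p : ℕ =>
        (1 / ((p : ℝ) * ((d : ℝ) - 1))) *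
          Real.log (∫ u in Set.Ioi (γ p),
            Real.exp ((p : ℝ) * ((d : ℝ) - 1) *
              (semicircleLogPotential u - u ^ 2 / 2)))
        - (semicircleLogPotential (γ p) - (γ p) ^ 2 / 2))
      Filter.atTop (nhds 0) :=
  laplace_tail_asymptotics_general d hd δ hδ γ hγ2 hγo
end
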